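/- arXiv:quant-ph/0312033 — 7 statements merged into one kernel-verified Lean document; each statement's English description precedes it below -/
import Mathlib

section
/- Let H be a complex linear operator on ℂⁿ. If all orbits {exp(-itH)ψ : t ∈ ℝ} are bounded sets for every initial condition ψ ∈ ℂⁿ, then H is diagonalizable and has real spectrum. -/
/-!
Along an eigenvector `H v = μ v` the orbit is `e^{-itμ} v`, of norm `e^{t Im μ} ‖v‖`, so
boundedness forces `μ` to be real. Along a Jordan chain `(H - μ) v = w`, `(H - μ) w = 0` with `μ`
real, the orbit is `e^{-itμ} (v - i t w)`, which grows linearly in `t` unless `w = 0`. Hence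
`ker (H - μ)² = ker (H - μ)`, every generalized eigenspace of `H` is an eigenspace, and since the
generalized eigenspaces of a complex matrix span `ℂⁿ`, `H` has an eigenbasis.
-/

open Matrix NormedSpace Module Module.End Set Bornology

theorem Module.End.maxGenEigenspace_le_eigenspace_of_genEigenspace_two_le
    {R M : Type*} [CommRing R] [AddCommGroup M] [Module R M] {f : End R M} {μ : R}
    (h : f.genEigenspace μ 2 ≤ f.eigenspace μ) : f.maxGenEigenspace μ ≤ f.eigenspace μ := by
  rw [← iSup_genEigenspace_eq]
  refine iSup_le fun k => ?_
  induction k with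
  | zero => simp
  | succ k ih =>
    intro x hx
    rw [genEigenspace_nat, LinearMap.mem_ker, pow_succ, mul_apply] at hx
    have hNx : (f - μ • 1) x ∈ f.eigenspace μ := ih (by rwa [genEigenspace_nat])
    rw [eigenspace_def, LinearMap.mem_ker] at hNx
    apply h
    rwa [← Nat.cast_ofNat, genEigenspace_nat, LinearMap.mem_ker, sq, mul_apply]

theorem Real.eq_zero_of_forall_exp_mul_le {a C : ℝ} (h : ∀ t : ℝ, Real.exp (t * a) ≤ C) :
    a = 0 := by
  by_contra ha
  have hC := h (C / a)
  rw [div_mul_cancel₀ _ ha] at hC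
  linarith [Real.add_one_le_exp C]

theorem eq_zero_of_forall_norm_add_smul_le {E : Type*} [NormedAddCommGroup E]
    [NormedSpace ℝ E] {v w : E} {C : ℝ} (h : ∀ t : ℝ, ‖v + t • w‖ ≤ C) : w = 0 := by
  by_contra hw
  have hwpos : 0 < ‖w‖ := norm_pos_iff.mpr hw
  have hv : ‖v‖ ≤ C := by simpa using h 0
  set t := (C + ‖v‖ + 1) / ‖w‖
  have htw : ‖t • w‖ = C + ‖v‖ + 1 := by
    rw [norm_smul, Real.norm_of_nonneg (div_nonneg (by linarith [norm_nonneg v]) hwpos.le),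
      div_mul_cancel₀ _ hwpos.ne']
  have hle : ‖t • w‖ ≤ ‖v + t • w‖ + ‖v‖ := by
    simpa using norm_sub_le (v + t • w) v
  linarith [h t]

namespace Matrix

section Diagonalization

variable {ι K : Type*} [Fintype ι] [DecidableEq ι] [Field K]

theorem exists_eq_mul_diagonal_mul_inv_of_mulVec_basis {A : Matrix ι ι K} (b : Basis ι K (ι → K))
    {d : ι → K} (hb : ∀ i, A *ᵥ b i = d i • b i) :
    ∃ P : Matrix ι ι K, IsUnit P.det ∧ A = P * diagonal d * P⁻¹ := by
  set P := (Pi.basisFun K ι).toMatrix b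
  have hPinv : P * b.toMatrix (Pi.basisFun K ι) = 1 := Basis.toMatrix_mul_toMatrix_flip _ _
  have hdiag : LinearMap.toMatrix b b (toLin' A) = diagonal d := by
    ext i j
    rw [LinearMap.toMatrix_apply, toLin'_apply, hb, map_smul, b.repr_self, diagonal_apply]
    by_cases hij : i = j <;> simp [hij]
  refine ⟨P, isUnit_det_of_right_inverse hPinv, ?_⟩
  rw [inv_eq_right_inv hPinv, ← hdiag, basis_toMatrix_mul_linearMap_toMatrix_mul_basis_toMatrix,
    LinearMap.toMatrix_eq_toMatrix', LinearMap.toMatrix'_toLin']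

theorem exists_isUnit_det_isDiag_of_iSup_eigenspace_eq_top {A : Matrix ι ι K}
    (h : ⨆ μ, eigenspace (toLin' A) μ = ⊤) :
    ∃ P D : Matrix ι ι K, IsUnit P.det ∧ D.IsDiag ∧ A = P * D * P⁻¹ ∧
      ∀ i, HasEigenvalue (toLin' A) (D i i) := by
  classical
  have hint := DirectSum.isInternal_submodule_of_iSupIndep_of_iSup_eq_top
    (eigenspaces_iSupIndep (toLin' A)) h
  let bs := hint.collectedBasis fun μ => Module.finBasis K (eigenspace (toLin' A) μ)
  let e := bs.indexEquiv (Pi.basisFun K ι)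
  let b := bs.reindex e
  let d : ι → K := fun i => (e.symm i).1
  have hmem : ∀ i, b i ∈ eigenspace (toLin' A) (d i) := fun i => by
    simpa only [b, Basis.reindex_apply] using hint.collectedBasis_mem _ (e.symm i)
  have hb : ∀ i, A *ᵥ b i = d i • b i := fun i => by
    rw [← toLin'_apply, ← mem_eigenspace_iff]; exact hmem i
  obtain ⟨P, hP, hA⟩ := exists_eq_mul_diagonal_mul_inv_of_mulVec_basis b hb
  refine ⟨P, diagonal d, hP, isDiag_diagonal d, hA, fun i => ?_⟩
  rw [diagonal_apply_eq]
  exact hasEigenvalue_of_hasEigenvector ⟨hmem i, b.ne_zero i⟩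

end Diagonalization

variable {m 𝕂 : Type*} [Fintype m] [DecidableEq m] [RCLike 𝕂]

section

-- `exp` on matrices depends only on their topology, so any matrix norm can be used to reach the
-- Banach-algebra lemmas.
open scoped Norms.Operator

theorem hasSum_exp_mulVec (A : Matrix m m 𝕂) (v : m → 𝕂) :
    HasSum (fun k => ((k.factorial : 𝕂)⁻¹) • (A ^ k *ᵥ v)) (exp A *ᵥ v) := by
  have h := (exp_series_hasSum_exp' (𝕂 := 𝕂) A).map (mulVec.addMonoidHomLeft v)
    (continuous_id.matrix_mulVec continuous_const)
  simp only [smul_mulVec, Function.comp_def, mulVec.addMonoidHomLeft, AddMonoidHom.coe_mk,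
    ZeroHom.coe_mk] at h
  exact h

theorem exp_smul_one (c : 𝕂) : exp (c • (1 : Matrix m m 𝕂)) = exp c • 1 := by
  rw [← Algebra.algebraMap_eq_smul_one, ← Algebra.algebraMap_eq_smul_one]
  exact (algebraMap_exp_comm c).symm

end

theorem exp_mulVec_of_mulVec_mulVec_eq_zero {N : Matrix m m 𝕂} {v : m → 𝕂}
    (h : N *ᵥ (N *ᵥ v) = 0) : exp N *ᵥ v = v + N *ᵥ v := by
  have hvanish : ∀ k ∉ Finset.range 2, ((k.factorial : 𝕂)⁻¹) • (N ^ k *ᵥ v) = 0 := by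
    intro k hk
    obtain ⟨k, rfl⟩ : ∃ j, k = j + 2 := ⟨k - 2, by simp at hk; omega⟩
    rw [pow_add, ← mulVec_mulVec, sq, ← mulVec_mulVec, h, mulVec_zero, smul_zero]
  refine (hasSum_exp_mulVec N v).unique ?_
  simpa [Finset.sum_range_succ] using hasSum_sum_of_ne_finset_zero (L := .unconditional ℕ) hvanish

theorem exp_mulVec_of_sub_smul_one_sq_mulVec_eq_zero {A : Matrix m m 𝕂} {c : 𝕂} {v : m → 𝕂}
    (h : (A - c • 1) *ᵥ ((A - c • 1) *ᵥ v) = 0) :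
    exp A *ᵥ v = exp c • (v + (A - c • 1) *ᵥ v) := by
  have hsplit : A = c • 1 + (A - c • 1) := by abel
  have hcomm : Commute (c • (1 : Matrix m m 𝕂)) (A - c • 1) := (Commute.one_left _).smul_left c
  rw [hsplit, exp_add_of_commute _ _ hcomm, ← mulVec_mulVec, ← hsplit, exp_smul_one,
    exp_mulVec_of_mulVec_mulVec_eq_zero h, smul_mulVec, one_mulVec]

variable {H : Matrix m m ℂ} {μ : ℂ} {v : m → ℂ}

theorem sub_smul_one_mulVec_eq_zero_iff : (H - μ • 1) *ᵥ v = 0 ↔ H *ᵥ v = μ • v := by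
  rw [sub_mulVec, smul_mulVec, one_mulVec, sub_eq_zero]

theorem exp_smul_mulVec_of_sub_smul_one_sq_mulVec_eq_zero (s : ℂ)
    (h : (H - μ • 1) *ᵥ ((H - μ • 1) *ᵥ v) = 0) :
    exp (s • H) *ᵥ v = Complex.exp (s * μ) • (v + s • ((H - μ • 1) *ᵥ v)) := by
  have hsub : s • H - (s * μ) • 1 = s • (H - μ • 1) := by rw [smul_sub, smul_smul]
  have hsq : (s • H - (s * μ) • 1) *ᵥ ((s • H - (s * μ) • 1) *ᵥ v) = 0 := by
    simp only [hsub, smul_mulVec, mulVec_smul, h, smul_zero]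
  rw [exp_mulVec_of_sub_smul_one_sq_mulVec_eq_zero hsq, hsub, smul_mulVec, Complex.exp_eq_exp_ℂ]

theorem im_eq_zero_of_isBounded_orbit (hv : v ≠ 0) (hHv : H *ᵥ v = μ • v)
    (hbdd : IsBounded (range fun t : ℝ => exp ((-(Complex.I * t)) • H) *ᵥ v)) : μ.im = 0 := by
  obtain ⟨C, hC⟩ := hbdd.exists_norm_le
  have hv0 : (H - μ • 1) *ᵥ v = 0 := sub_smul_one_mulVec_eq_zero_iff.mpr hHv
  refine Real.eq_zero_of_forall_exp_mul_le (C := C / ‖v‖) fun t => ?_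
  have horbit := exp_smul_mulVec_of_sub_smul_one_sq_mulVec_eq_zero (-(Complex.I * t))
    (by rw [hv0, mulVec_zero])
  have hre : (-(Complex.I * t) * μ).re = t * μ.im := by simp [Complex.mul_re]
  have hnorm : ‖exp ((-(Complex.I * t)) • H) *ᵥ v‖ = Real.exp (t * μ.im) * ‖v‖ := by
    rw [horbit, hv0, smul_zero, add_zero, norm_smul, Complex.norm_exp, hre]
  rw [le_div_iff₀ (norm_pos_iff.mpr hv), ← hnorm]
  exact hC _ ⟨t, rfl⟩

theorem sub_smul_one_mulVec_eq_zero_of_isBounded_orbit (hμ : μ.im = 0)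
    (h : (H - μ • 1) *ᵥ ((H - μ • 1) *ᵥ v) = 0)
    (hbdd : IsBounded (range fun t : ℝ => exp ((-(Complex.I * t)) • H) *ᵥ v)) :
    (H - μ • 1) *ᵥ v = 0 := by
  obtain ⟨C, hC⟩ := hbdd.exists_norm_le
  set w := (H - μ • 1) *ᵥ v
  suffices -Complex.I • w = 0 by simpa using this
  refine eq_zero_of_forall_norm_add_smul_le (v := v) (C := C) fun t => ?_
  have horbit := exp_smul_mulVec_of_sub_smul_one_sq_mulVec_eq_zero (-(Complex.I * t)) h
  have hunit : ‖Complex.exp (-(Complex.I * t) * μ)‖ = 1 := by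
    simp [Complex.norm_exp, Complex.mul_re, hμ]
  have hsmul : (-(Complex.I * t)) • w = t • -Complex.I • w := by
    rw [← Complex.coe_smul, smul_smul]
    ring_nf
  have hnorm : ‖exp ((-(Complex.I * t)) • H) *ᵥ v‖ = ‖v + t • -Complex.I • w‖ := by
    rw [horbit, norm_smul, hunit, one_mul, hsmul]
  exact hnorm ▸ hC _ ⟨t, rfl⟩

theorem genEigenspace_two_le_eigenspace_of_isBounded_orbits
    (hbdd : ∀ ψ, IsBounded (range fun t : ℝ => exp ((-(Complex.I * t)) • H) *ᵥ ψ)) (μ : ℂ) :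
    genEigenspace (toLin' H) μ 2 ≤ eigenspace (toLin' H) μ := by
  intro x hx
  have hlin : toLin' H - μ • 1 = toLin' (H - μ • 1) := by
    rw [map_sub, map_smul, toLin'_one, Module.End.one_eq_id]
  rw [← Nat.cast_ofNat, genEigenspace_nat, hlin, LinearMap.mem_ker, sq, Module.End.mul_apply,
    toLin'_apply, toLin'_apply] at hx
  rw [mem_eigenspace_iff, toLin'_apply, ← sub_smul_one_mulVec_eq_zero_iff]
  by_contra hw
  have hμ := im_eq_zero_of_isBounded_orbit hw (sub_smul_one_mulVec_eq_zero_iff.mp hx) (hbdd _)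
  exact hw (sub_smul_one_mulVec_eq_zero_of_isBounded_orbit hμ hx (hbdd x))

end Matrix

/-- If every orbit `{exp(-itH) ψ : t ∈ ℝ}` of the flow of a complex linear operator `H` on
`ℂⁿ` is a bounded set, then `H` is diagonalizable with real spectrum. -/
theorem orbits_bounded_imp_diagonalizable_real_spectrum
    {n : ℕ} (H : Matrix (Fin n) (Fin n) ℂ)
    (hbdd : ∀ ψ : Fin n → ℂ,
      Bornology.IsBounded
        {x : Fin n → ℂ | ∃ t : ℝ,
          x = (NormedSpace.exp ((-(Complex.I * (t : ℂ))) • H)).mulVec ψ}) :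
    ∃ P D : Matrix (Fin n) (Fin n) ℂ,
      IsUnit P.det ∧ D.IsDiag ∧ H = P * D * P⁻¹ ∧ ∀ i, (D i i).im = 0 := by
  have horbits : ∀ ψ, IsBounded (range fun t : ℝ => exp ((-(Complex.I * t)) • H) *ᵥ ψ) :=
    fun ψ => by simpa only [range, eq_comm] using hbdd ψ
  have hgen : ∀ μ, maxGenEigenspace (toLin' H) μ ≤ eigenspace (toLin' H) μ := fun μ =>
    maxGenEigenspace_le_eigenspace_of_genEigenspace_two_le
      (Matrix.genEigenspace_two_le_eigenspace_of_isBounded_orbits horbits μ)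
  have htop : ⨆ μ, eigenspace (toLin' H) μ = ⊤ :=
    top_unique ((iSup_maxGenEigenspace_eq_top _).ge.trans (iSup_mono hgen))
  obtain ⟨P, D, hP, hD, hPD, heig⟩ :=
    Matrix.exists_isUnit_det_isDiag_of_iSup_eigenspace_eq_top htop
  refine ⟨P, D, hP, hD, hPD, fun i => ?_⟩
  obtain ⟨v, hv⟩ := (heig i).exists_hasEigenvector
  exact Matrix.im_eq_zero_of_isBounded_orbit hv.2 (mem_eigenspace_iff.mp hv.1) (horbits v)
end

section
/- Let T be an invertible bounded operator on a complex Hilbert space ℍ with ‖Tᵏ‖ ≤ c for all k ∈ ℤ. Then there exists a bounded positive self-adjoint operator Q with (1/c)·I ≤ Q ≤ c·I such that Q T Q⁻¹ is unitary. -/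
set_option linter.unusedSectionVars false
open ContinuousLinearMap Filter Finset ComplexConjugate Complex Topology

namespace NagyAux

local notation "⟪" x ", " y "⟫" => @inner ℂ _ _ x y

variable {ℍ : Type*} [NormedAddCommGroup ℍ] [InnerProductSpace ℂ ℍ] [CompleteSpace ℍ]

noncomputable def avg (A : ℍ →L[ℂ] ℍ) (x y : ℍ) (n : ℕ) : ℂ :=
  (n + 1 : ℂ)⁻¹ * ∑ k ∈ Finset.range (n + 1), ⟪(A ^ k) x, (A ^ k) y⟫

noncomputable def UF : Ultrafilter ℕ := Ultrafilter.of atTop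

lemma UF_le : (UF : Filter ℕ) ≤ atTop := Ultrafilter.of_le _

variable {A : ℍ →L[ℂ] ℍ} {c : ℝ}

lemma avg_norm_le (hA : ∀ k : ℕ, ‖A ^ k‖ ≤ c) (x y : ℍ) (n : ℕ) :
    ‖avg A x y n‖ ≤ c * c * (‖x‖ * ‖y‖) := by
  have hc : 0 ≤ c := (norm_nonneg _).trans (hA 0)
  have hterm : ∀ k, ‖⟪(A ^ k) x, (A ^ k) y⟫‖ ≤ c * c * (‖x‖ * ‖y‖) := by
    intro k
    calc ‖⟪(A ^ k) x, (A ^ k) y⟫‖ ≤ ‖(A ^ k) x‖ * ‖(A ^ k) y‖ := norm_inner_le_norm _ _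
      _ ≤ (c * ‖x‖) * (c * ‖y‖) :=
          mul_le_mul ((A ^ k).le_of_opNorm_le (hA k) x) ((A ^ k).le_of_opNorm_le (hA k) y)
            (norm_nonneg _) (by positivity)
      _ = c * c * (‖x‖ * ‖y‖) := by ring
  have h1 : ‖∑ k ∈ Finset.range (n + 1), ⟪(A ^ k) x, (A ^ k) y⟫‖
      ≤ (n + 1) * (c * c * (‖x‖ * ‖y‖)) := by
    refine (norm_sum_le _ _).trans ?_
    calc ∑ k ∈ Finset.range (n + 1), ‖⟪(A ^ k) x, (A ^ k) y⟫‖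
        ≤ ∑ _k ∈ Finset.range (n + 1), c * c * (‖x‖ * ‖y‖) :=
          Finset.sum_le_sum fun k _ => hterm k
      _ = (n + 1) * (c * c * (‖x‖ * ‖y‖)) := by
          rw [Finset.sum_const, Finset.card_range, nsmul_eq_mul]
          push_cast; ring
  have hn : ‖(n + 1 : ℂ)⁻¹‖ = ((n : ℝ) + 1)⁻¹ := by
    rw [norm_inv]
    congr 1
    have : ((n : ℂ) + 1) = (((n : ℝ) + 1 : ℝ) : ℂ) := by push_cast; ring
    rw [this, Complex.norm_real, Real.norm_of_nonneg (by positivity)]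
  calc ‖avg A x y n‖ = ‖(n + 1 : ℂ)⁻¹‖ * ‖∑ k ∈ Finset.range (n + 1), ⟪(A ^ k) x, (A ^ k) y⟫‖ := by
        rw [avg, norm_mul]
    _ ≤ ((n : ℝ) + 1)⁻¹ * ((n + 1) * (c * c * (‖x‖ * ‖y‖))) := by
        rw [hn]
        exact mul_le_mul_of_nonneg_left h1 (by positivity)
    _ = c * c * (‖x‖ * ‖y‖) := by
        rw [← mul_assoc, inv_mul_cancel₀ (by positivity), one_mul]

noncomputable def Blim (A : ℍ →L[ℂ] ℍ) (x y : ℍ) : ℂ := limUnder UF (avg A x y)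

lemma tendsto_avg (hA : ∀ k : ℕ, ‖A ^ k‖ ≤ c) (x y : ℍ) :
    Tendsto (avg A x y) UF (𝓝 (Blim A x y)) := by
  apply tendsto_nhds_limUnder
  have hcpt : IsCompact (Metric.closedBall (0 : ℂ) (c * c * (‖x‖ * ‖y‖))) :=
    isCompact_closedBall _ _
  obtain ⟨L, -, hL⟩ := hcpt.ultrafilter_le_nhds (UF.map (avg A x y))
    (by
      refine Filter.le_principal_iff.mpr ?_
      exact Filter.mem_map.mpr (Filter.univ_mem' fun n => by
        simpa [Metric.mem_closedBall, dist_eq_norm] using avg_norm_le hA x y n))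
  exact ⟨L, hL⟩


lemma avg_add_right (x y z : ℍ) (n : ℕ) :
    avg A x (y + z) n = avg A x y n + avg A x z n := by
  simp only [avg, map_add, inner_add_right, Finset.sum_add_distrib, mul_add]

lemma avg_smul_right (x y : ℍ) (a : ℂ) (n : ℕ) :
    avg A x (a • y) n = a * avg A x y n := by
  simp only [avg, map_smul, inner_smul_right, ← Finset.mul_sum]
  ring

lemma avg_conj (x y : ℍ) (n : ℕ) :
    (starRingEnd ℂ) (avg A x y n) = avg A y x n := by
  simp only [avg, map_mul, map_sum, inner_conj_symm]
  congr 1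
  rw [map_inv₀]
  congr 1
  simp

lemma Blim_add_right (hA : ∀ k : ℕ, ‖A ^ k‖ ≤ c) (x y z : ℍ) :
    Blim A x (y + z) = Blim A x y + Blim A x z := by
  refine tendsto_nhds_unique (tendsto_avg hA x (y + z)) ?_
  have := (tendsto_avg hA x y).add (tendsto_avg hA x z)
  refine this.congr fun n => (avg_add_right x y z n).symm

lemma Blim_smul_right (hA : ∀ k : ℕ, ‖A ^ k‖ ≤ c) (x y : ℍ) (a : ℂ) :
    Blim A x (a • y) = a * Blim A x y := by
  refine tendsto_nhds_unique (tendsto_avg hA x (a • y)) ?_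
  have := (tendsto_avg hA x y).const_mul a
  refine this.congr fun n => (avg_smul_right x y a n).symm

lemma Blim_conj (hA : ∀ k : ℕ, ‖A ^ k‖ ≤ c) (x y : ℍ) :
    (starRingEnd ℂ) (Blim A x y) = Blim A y x := by
  refine tendsto_nhds_unique ?_ (tendsto_avg hA y x)
  have : Tendsto (fun n => (starRingEnd ℂ) (avg A x y n)) UF
      (𝓝 ((starRingEnd ℂ) (Blim A x y))) :=
    (Complex.continuous_conj.tendsto _).comp (tendsto_avg hA x y)
  exact this.congr fun n => avg_conj x y n

lemma Blim_norm_le (hA : ∀ k : ℕ, ‖A ^ k‖ ≤ c) (x y : ℍ) :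
    ‖Blim A x y‖ ≤ c * c * (‖x‖ * ‖y‖) :=
  le_of_tendsto (tendsto_avg hA x y).norm
    (Filter.Eventually.of_forall (avg_norm_le hA x y))

lemma avg_self_re (x : ℍ) (n : ℕ) :
    (avg A x x n).re = ((n : ℝ) + 1)⁻¹ * ∑ k ∈ Finset.range (n + 1), ‖(A ^ k) x‖ ^ 2 := by
  have hs : ∑ k ∈ Finset.range (n + 1), ⟪(A ^ k) x, (A ^ k) x⟫
      = ((∑ k ∈ Finset.range (n + 1), ‖(A ^ k) x‖ ^ 2 : ℝ) : ℂ) := by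
    push_cast
    exact Finset.sum_congr rfl fun k _ => by
      rw [inner_self_eq_norm_sq_to_K]
      norm_cast
  have : avg A x x n =
      ((((n : ℝ) + 1)⁻¹ * ∑ k ∈ Finset.range (n + 1), ‖(A ^ k) x‖ ^ 2 : ℝ) : ℂ) := by
    rw [avg, hs]
    push_cast
    ring
  rw [this, Complex.ofReal_re]

lemma avg_self_re_le (hA : ∀ k : ℕ, ‖A ^ k‖ ≤ c) (x : ℍ) (n : ℕ) :
    (avg A x x n).re ≤ c * c * (‖x‖ * ‖x‖) := by
  have hc : 0 ≤ c := (norm_nonneg _).trans (hA 0)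
  rw [avg_self_re]
  have h1 : ∑ k ∈ Finset.range (n + 1), ‖(A ^ k) x‖ ^ 2
      ≤ ((n : ℝ) + 1) * (c * c * (‖x‖ * ‖x‖)) := by
    calc ∑ k ∈ Finset.range (n + 1), ‖(A ^ k) x‖ ^ 2
        ≤ ∑ _k ∈ Finset.range (n + 1), c * c * (‖x‖ * ‖x‖) := by
          refine Finset.sum_le_sum fun k _ => ?_
          have := (A ^ k).le_of_opNorm_le (hA k) x
          calc ‖(A ^ k) x‖ ^ 2 ≤ (c * ‖x‖) ^ 2 := by
                exact pow_le_pow_left₀ (norm_nonneg _) this 2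
            _ = c * c * (‖x‖ * ‖x‖) := by ring
      _ = ((n : ℝ) + 1) * (c * c * (‖x‖ * ‖x‖)) := by
          rw [Finset.sum_const, Finset.card_range, nsmul_eq_mul]; push_cast; ring
  calc ((n : ℝ) + 1)⁻¹ * ∑ k ∈ Finset.range (n + 1), ‖(A ^ k) x‖ ^ 2
      ≤ ((n : ℝ) + 1)⁻¹ * (((n : ℝ) + 1) * (c * c * (‖x‖ * ‖x‖))) :=
        mul_le_mul_of_nonneg_left h1 (by positivity)
    _ = c * c * (‖x‖ * ‖x‖) := by
        rw [← mul_assoc, inv_mul_cancel₀ (by positivity), one_mul]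

lemma avg_self_re_ge (hc : 0 < c) (hAinv : ∀ (k : ℕ) (z : ℍ), ‖z‖ ≤ c * ‖(A ^ k) z‖)
    (x : ℍ) (n : ℕ) : c⁻¹ * c⁻¹ * (‖x‖ * ‖x‖) ≤ (avg A x x n).re := by
  rw [avg_self_re]
  have h1 : ((n : ℝ) + 1) * (c⁻¹ * c⁻¹ * (‖x‖ * ‖x‖))
      ≤ ∑ k ∈ Finset.range (n + 1), ‖(A ^ k) x‖ ^ 2 := by
    calc ((n : ℝ) + 1) * (c⁻¹ * c⁻¹ * (‖x‖ * ‖x‖))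
        = ∑ _k ∈ Finset.range (n + 1), c⁻¹ * c⁻¹ * (‖x‖ * ‖x‖) := by
          rw [Finset.sum_const, Finset.card_range, nsmul_eq_mul]; push_cast; ring
      _ ≤ ∑ k ∈ Finset.range (n + 1), ‖(A ^ k) x‖ ^ 2 := by
          refine Finset.sum_le_sum fun k _ => ?_
          have h2 : ‖x‖ ≤ c * ‖(A ^ k) x‖ := hAinv k x
          have h3 : ‖x‖ ^ 2 ≤ (c * ‖(A ^ k) x‖) ^ 2 := pow_le_pow_left₀ (norm_nonneg _) h2 2
          have h4 : c⁻¹ * c⁻¹ * (‖x‖ * ‖x‖) = ‖x‖ ^ 2 / c ^ 2 := by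
            field_simp
          rw [h4, div_le_iff₀ (by positivity)]
          calc ‖x‖ ^ 2 ≤ (c * ‖(A ^ k) x‖) ^ 2 := h3
            _ = ‖(A ^ k) x‖ ^ 2 * c ^ 2 := by ring
  calc c⁻¹ * c⁻¹ * (‖x‖ * ‖x‖)
      = ((n : ℝ) + 1)⁻¹ * (((n : ℝ) + 1) * (c⁻¹ * c⁻¹ * (‖x‖ * ‖x‖))) := by
        rw [inv_mul_cancel_left₀ (by positivity : ((n : ℝ) + 1) ≠ 0)]
    _ ≤ ((n : ℝ) + 1)⁻¹ * ∑ k ∈ Finset.range (n + 1), ‖(A ^ k) x‖ ^ 2 :=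
        mul_le_mul_of_nonneg_left h1 (by positivity)

lemma tendsto_avg_re (hA : ∀ k : ℕ, ‖A ^ k‖ ≤ c) (x : ℍ) :
    Tendsto (fun n => (avg A x x n).re) UF (𝓝 (Blim A x x).re) :=
  (Complex.continuous_re.tendsto _).comp (tendsto_avg hA x x)

lemma Blim_self_re_le (hA : ∀ k : ℕ, ‖A ^ k‖ ≤ c) (x : ℍ) :
    (Blim A x x).re ≤ c * c * (‖x‖ * ‖x‖) :=
  le_of_tendsto (tendsto_avg_re hA x) (Filter.Eventually.of_forall (avg_self_re_le hA x))

lemma Blim_self_re_ge (hc : 0 < c) (hA : ∀ k : ℕ, ‖A ^ k‖ ≤ c)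
    (hAinv : ∀ (k : ℕ) (z : ℍ), ‖z‖ ≤ c * ‖(A ^ k) z‖) (x : ℍ) :
    c⁻¹ * c⁻¹ * (‖x‖ * ‖x‖) ≤ (Blim A x x).re :=
  ge_of_tendsto (tendsto_avg_re hA x)
    (Filter.Eventually.of_forall (avg_self_re_ge hc hAinv x))

lemma Blim_shift (hA : ∀ k : ℕ, ‖A ^ k‖ ≤ c) (x y : ℍ) :
    Blim A (A x) (A y) = Blim A x y := by
  have hc : 0 ≤ c := (norm_nonneg _).trans (hA 0)
  set f : ℕ → ℂ := fun k => ⟪(A ^ k) x, (A ^ k) y⟫ with hf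
  have key : ∀ n, avg A (A x) (A y) n = avg A x y n + (n + 1 : ℂ)⁻¹ * (f (n + 1) - f 0) := by
    intro n
    have h1 : ∀ k, ⟪(A ^ k) (A x), (A ^ k) (A y)⟫ = f (k + 1) := by
      intro k
      have : ∀ z : ℍ, (A ^ k) (A z) = (A ^ (k + 1)) z := by
        intro z
        rw [pow_succ, ContinuousLinearMap.mul_apply]
      rw [this, this]
    have h2 : ∑ k ∈ Finset.range (n + 1), ⟪(A ^ k) (A x), (A ^ k) (A y)⟫
        = ∑ k ∈ Finset.range (n + 1), f k + (f (n + 1) - f 0) := by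
      simp only [h1]
      have h3 : ∑ k ∈ Finset.range (n + 2), f k
          = ∑ k ∈ Finset.range (n + 1), f (k + 1) + f 0 := Finset.sum_range_succ' f (n + 1)
      have h4 : ∑ k ∈ Finset.range (n + 2), f k
          = ∑ k ∈ Finset.range (n + 1), f k + f (n + 1) := Finset.sum_range_succ f (n + 1)
      linear_combination h4 - h3
    rw [avg, avg, h2, mul_add]
  have hcorr : Tendsto (fun n : ℕ => (n + 1 : ℂ)⁻¹ * (f (n + 1) - f 0)) UF (𝓝 0) := by
    refine Tendsto.mono_left ?_ UF_le
    have hb : ∀ n : ℕ, ‖(n + 1 : ℂ)⁻¹ * (f (n + 1) - f 0)‖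
        ≤ ((n : ℝ) + 1)⁻¹ * (2 * (c * c * (‖x‖ * ‖y‖))) := by
      intro n
      rw [norm_mul]
      have hfb : ∀ k, ‖f k‖ ≤ c * c * (‖x‖ * ‖y‖) := by
        intro k
        calc ‖f k‖ ≤ ‖(A ^ k) x‖ * ‖(A ^ k) y‖ := norm_inner_le_norm _ _
          _ ≤ (c * ‖x‖) * (c * ‖y‖) :=
            mul_le_mul ((A ^ k).le_of_opNorm_le (hA k) x) ((A ^ k).le_of_opNorm_le (hA k) y)
              (norm_nonneg _) (by positivity)
          _ = c * c * (‖x‖ * ‖y‖) := by ring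
      have hn : ‖(n + 1 : ℂ)⁻¹‖ = ((n : ℝ) + 1)⁻¹ := by
        rw [norm_inv]
        congr 1
        have : ((n : ℂ) + 1) = (((n : ℝ) + 1 : ℝ) : ℂ) := by push_cast; ring
        rw [this, Complex.norm_real, Real.norm_of_nonneg (by positivity)]
      rw [hn]
      refine mul_le_mul_of_nonneg_left ?_ (by positivity)
      calc ‖f (n + 1) - f 0‖ ≤ ‖f (n + 1)‖ + ‖f 0‖ := norm_sub_le _ _
        _ ≤ c * c * (‖x‖ * ‖y‖) + c * c * (‖x‖ * ‖y‖) := add_le_add (hfb _) (hfb _)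
        _ = 2 * (c * c * (‖x‖ * ‖y‖)) := by ring
    have hg : Tendsto (fun n : ℕ => ((n : ℝ) + 1)⁻¹ * (2 * (c * c * (‖x‖ * ‖y‖))))
        atTop (𝓝 0) := by
      have := (tendsto_one_div_add_atTop_nhds_zero_nat).mul_const
        (2 * (c * c * (‖x‖ * ‖y‖)))
      simpa [one_div] using this
    exact squeeze_zero_norm hb hg
  refine tendsto_nhds_unique (tendsto_avg hA (A x) (A y)) ?_
  have := (tendsto_avg hA x y).add hcorr
  rw [add_zero] at this
  exact this.congr fun n => (key n).symm


lemma Blim_add_left (hA : ∀ k : ℕ, ‖A ^ k‖ ≤ c) (x x' y : ℍ) :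
    Blim A (x + x') y = Blim A x y + Blim A x' y := by
  rw [← Blim_conj hA y (x + x'), Blim_add_right hA y x x', map_add,
    Blim_conj hA y x, Blim_conj hA y x']

lemma Blim_smul_left (hA : ∀ k : ℕ, ‖A ^ k‖ ≤ c) (x y : ℍ) (a : ℂ) :
    Blim A (a • x) y = (starRingEnd ℂ) a * Blim A x y := by
  rw [← Blim_conj hA y (a • x), Blim_smul_right hA y x a, map_mul, Blim_conj hA y x]

lemma exists_S (hA : ∀ k : ℕ, ‖A ^ k‖ ≤ c) :
    ∃ S : ℍ →L[ℂ] ℍ, ∀ x y : ℍ, ⟪S x, y⟫ = Blim A x y := by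
  have hc : 0 ≤ c := (norm_nonneg _).trans (hA 0)
  have hF : ∀ x : ℍ, ∃ F : ℍ →L[ℂ] ℂ, ∀ y, F y = Blim A x y := by
    intro x
    refine ⟨LinearMap.mkContinuous
      { toFun := fun y => Blim A x y
        map_add' := fun y z => Blim_add_right hA x y z
        map_smul' := fun a y => by simpa using Blim_smul_right hA x y a }
      (c * c * ‖x‖) (fun y => by
        simpa [mul_assoc] using Blim_norm_le hA x y), fun y => rfl⟩
  choose F hF1 using hF
  have hkey : ∀ x y : ℍ, ⟪(InnerProductSpace.toDual ℂ ℍ).symm (F x), y⟫ = Blim A x y := by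
    intro x y
    rw [InnerProductSpace.toDual_symm_apply, hF1]
  have hnorm : ∀ x : ℍ, ‖(InnerProductSpace.toDual ℂ ℍ).symm (F x)‖ ≤ c * c * ‖x‖ := by
    intro x
    rw [LinearIsometryEquiv.norm_map]
    refine (F x).opNorm_le_bound (by positivity) fun y => ?_
    rw [hF1]
    simpa [mul_assoc] using Blim_norm_le hA x y
  refine ⟨LinearMap.mkContinuous
    { toFun := fun x => (InnerProductSpace.toDual ℂ ℍ).symm (F x)
      map_add' := fun x x' => ext_inner_right ℂ fun y => by
        rw [inner_add_left, hkey, hkey, hkey, Blim_add_left hA]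
      map_smul' := fun a x => ext_inner_right ℂ fun y => by
        rw [RingHom.id_apply, inner_smul_left, hkey, hkey, Blim_smul_left hA] }
    (c * c) (fun x => by simpa [mul_assoc] using hnorm x), fun x y => hkey x y⟩


lemma nagy_key (T : ℍ ≃L[ℂ] ℍ) (c : ℝ) (hc : 1 ≤ c)
    (hA : ∀ k : ℕ, ‖(T : ℍ →L[ℂ] ℍ) ^ k‖ ≤ c)
    (hAinv : ∀ (k : ℕ) (z : ℍ), ‖z‖ ≤ c * ‖((T : ℍ →L[ℂ] ℍ) ^ k) z‖) :
    ∃ Q : ℍ ≃L[ℂ] ℍ,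
      (Q : ℍ →L[ℂ] ℍ).IsPositive ∧
      ((Q : ℍ →L[ℂ] ℍ) - (c⁻¹ : ℂ) • (1 : ℍ →L[ℂ] ℍ)).IsPositive ∧
      ((c : ℂ) • (1 : ℍ →L[ℂ] ℍ) - (Q : ℍ →L[ℂ] ℍ)).IsPositive ∧
      ∀ x : ℍ, ‖(Q * T * Q⁻¹ : ℍ ≃L[ℂ] ℍ) x‖ = ‖x‖ := by
  set A : ℍ →L[ℂ] ℍ := (T : ℍ →L[ℂ] ℍ) with hAdef
  have hc0 : (0 : ℝ) < c := lt_of_lt_of_le one_pos hc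
  obtain ⟨S, hS⟩ := exists_S hA
  -- self-adjointness of S
  have hSsa : IsSelfAdjoint S := by
    rw [ContinuousLinearMap.isSelfAdjoint_iff_isSymmetric]
    intro x y
    show ⟪S x, y⟫ = ⟪x, S y⟫
    rw [hS, ← inner_conj_symm, hS, Blim_conj hA]
  -- algebraMap facts
  have halg : ∀ (r : ℝ) (x : ℍ), (algebraMap ℝ (ℍ →L[ℂ] ℍ) r) x = (r : ℂ) • x := by
    intro r x
    rw [IsScalarTower.algebraMap_apply ℝ ℂ (ℍ →L[ℂ] ℍ), Algebra.algebraMap_eq_smul_one]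
    rfl
  have halgsa : ∀ r : ℝ, IsSelfAdjoint (algebraMap ℝ (ℍ →L[ℂ] ℍ) r) := by
    intro r
    rw [ContinuousLinearMap.isSelfAdjoint_iff_isSymmetric]
    intro x y
    show ⟪(algebraMap ℝ (ℍ →L[ℂ] ℍ) r) x, y⟫ = ⟪x, (algebraMap ℝ (ℍ →L[ℂ] ℍ) r) y⟫
    rw [halg, halg, inner_smul_left, inner_smul_right, Complex.conj_ofReal]
  have hre_alg : ∀ (r : ℝ) (x : ℍ), (⟪(algebraMap ℝ (ℍ →L[ℂ] ℍ) r) x, x⟫).re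
      = r * ‖x‖ ^ 2 := by
    intro r x
    rw [halg, inner_smul_left, Complex.conj_ofReal, inner_self_eq_norm_sq_to_K]
    norm_cast
    simp [Complex.mul_re, RCLike.re_to_complex, RCLike.ofReal_re, RCLike.ofReal_im, ← Complex.ofReal_pow]
  have hre_S : ∀ x : ℍ, (⟪S x, x⟫).re = (Blim A x x).re := fun x => by rw [hS]
  -- order bounds on S
  have hlow : algebraMap ℝ (ℍ →L[ℂ] ℍ) (c⁻¹ * c⁻¹) ≤ S := by
    rw [ContinuousLinearMap.le_def]
    refine ⟨ContinuousLinearMap.isSelfAdjoint_iff_isSymmetric.mp (hSsa.sub (halgsa _)), fun x => ?_⟩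
    rw [ContinuousLinearMap.reApplyInnerSelf_apply, ContinuousLinearMap.sub_apply,
      inner_sub_left]
    have h1 := Blim_self_re_ge hc0 hA hAinv x
    have h2 := hre_alg (c⁻¹ * c⁻¹) x
    have h3 := hre_S x
    simp only [RCLike.re_to_complex, Complex.sub_re]
    rw [h2, h3]
    nlinarith [sq_nonneg (‖x‖ : ℝ), _root_.sq_abs (‖x‖ : ℝ)]
  have hup : S ≤ algebraMap ℝ (ℍ →L[ℂ] ℍ) (c * c) := by
    rw [ContinuousLinearMap.le_def]
    refine ⟨ContinuousLinearMap.isSelfAdjoint_iff_isSymmetric.mp ((halgsa _).sub hSsa), fun x => ?_⟩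
    rw [ContinuousLinearMap.reApplyInnerSelf_apply, ContinuousLinearMap.sub_apply,
      inner_sub_left]
    have h1 := Blim_self_re_le hA x
    have h2 := hre_alg (c * c) x
    have h3 := hre_S x
    simp only [RCLike.re_to_complex, Complex.sub_re]
    rw [h2, h3]
    nlinarith [sq_nonneg (‖x‖ : ℝ)]
  -- spectrum bounds
  have hspec_low : ∀ t ∈ spectrum ℝ S, c⁻¹ * c⁻¹ ≤ t := by
    have e1 : cfc (fun s : ℝ => s - c⁻¹ * c⁻¹) S = S - algebraMap ℝ (ℍ →L[ℂ] ℍ) (c⁻¹ * c⁻¹) := by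
      rw [cfc_sub (fun s : ℝ => s) (fun _ : ℝ => c⁻¹ * c⁻¹) S, cfc_id' ℝ S hSsa,
        cfc_const _ S hSsa]
    intro t ht
    have h1 : (0 : ℍ →L[ℂ] ℍ) ≤ cfc (fun s : ℝ => s - c⁻¹ * c⁻¹) S := by
      rw [e1]; exact sub_nonneg.mpr hlow
    have h2 := (cfc_nonneg_iff (fun s : ℝ => s - c⁻¹ * c⁻¹) S (by fun_prop) hSsa).mp h1 t ht
    linarith
  have hspec_up : ∀ t ∈ spectrum ℝ S, t ≤ c * c := by
    have e1 : cfc (fun s : ℝ => c * c - s) S = algebraMap ℝ (ℍ →L[ℂ] ℍ) (c * c) - S := by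
      rw [cfc_sub (fun _ : ℝ => c * c) (fun s : ℝ => s) S, cfc_id' ℝ S hSsa,
        cfc_const _ S hSsa]
    intro t ht
    have h1 : (0 : ℍ →L[ℂ] ℍ) ≤ cfc (fun s : ℝ => c * c - s) S := by
      rw [e1]; exact sub_nonneg.mpr hup
    have h2 := (cfc_nonneg_iff (fun s : ℝ => c * c - s) S (by fun_prop) hSsa).mp h1 t ht
    linarith
  have hspec0 : ∀ t ∈ spectrum ℝ S, 0 ≤ t := fun t ht =>
    le_trans (by positivity) (hspec_low t ht)
  -- square root
  set Q : ℍ →L[ℂ] ℍ := cfc Real.sqrt S with hQdef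
  set Qi : ℍ →L[ℂ] ℍ := cfc (fun s : ℝ => (Real.sqrt s)⁻¹) S with hQidef
  have hcont1 : ContinuousOn Real.sqrt (spectrum ℝ S) := Real.continuous_sqrt.continuousOn
  have hsqrt_ne : ∀ t ∈ spectrum ℝ S, Real.sqrt t ≠ 0 := by
    intro t ht
    exact ne_of_gt (Real.sqrt_pos.mpr (lt_of_lt_of_le (by positivity) (hspec_low t ht)))
  have hcont2 : ContinuousOn (fun s : ℝ => (Real.sqrt s)⁻¹) (spectrum ℝ S) :=
    ContinuousOn.inv₀ hcont1 hsqrt_ne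
  have hQsa : IsSelfAdjoint Q := cfc_predicate _ _
  have hQQ : Q * Q = S := by
    rw [hQdef, ← cfc_mul _ _ S hcont1 hcont1]
    calc cfc (fun s : ℝ => Real.sqrt s * Real.sqrt s) S = cfc (fun s : ℝ => s) S :=
        cfc_congr fun t ht => Real.mul_self_sqrt (hspec0 t ht)
      _ = S := cfc_id' ℝ S hSsa
  have hQQi : Q * Qi = 1 := by
    rw [hQdef, hQidef, ← cfc_mul _ _ S hcont1 hcont2]
    calc cfc (fun s : ℝ => Real.sqrt s * (Real.sqrt s)⁻¹) S = cfc (fun _ : ℝ => (1 : ℝ)) S :=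
        cfc_congr fun t ht => mul_inv_cancel₀ (hsqrt_ne t ht)
      _ = 1 := by rw [cfc_const _ S hSsa, map_one]
  have hQiQ : Qi * Q = 1 := by
    rw [hQdef, hQidef, ← cfc_mul _ _ S hcont2 hcont1]
    calc cfc (fun s : ℝ => (Real.sqrt s)⁻¹ * Real.sqrt s) S = cfc (fun _ : ℝ => (1 : ℝ)) S :=
        cfc_congr fun t ht => inv_mul_cancel₀ (hsqrt_ne t ht)
      _ = 1 := by rw [cfc_const _ S hSsa, map_one]
  -- the equivalence
  set Qe : ℍ ≃L[ℂ] ℍ := ContinuousLinearEquiv.equivOfInverse Q Qi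
    (fun x => by rw [← ContinuousLinearMap.mul_apply, hQiQ, ContinuousLinearMap.one_apply])
    (fun x => by rw [← ContinuousLinearMap.mul_apply, hQQi, ContinuousLinearMap.one_apply])
    with hQedef
  have hQe : (Qe : ℍ →L[ℂ] ℍ) = Q := by
    ext x
    simp [hQedef, ContinuousLinearEquiv.equivOfInverse_apply]
  have hQesymm : ∀ y : ℍ, Qe.symm y = Qi y := by
    intro y
    rw [hQedef, ContinuousLinearEquiv.symm_equivOfInverse,
      ContinuousLinearEquiv.equivOfInverse_apply]
  -- positivity facts
  have hQpos : Q.IsPositive := (ContinuousLinearMap.nonneg_iff_isPositive _).mp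
    (cfc_nonneg fun t _ => Real.sqrt_nonneg t)
  have hsm : ∀ r : ℝ, ((r : ℂ)) • (1 : ℍ →L[ℂ] ℍ) = algebraMap ℝ (ℍ →L[ℂ] ℍ) r := by
    intro r
    rw [IsScalarTower.algebraMap_apply ℝ ℂ (ℍ →L[ℂ] ℍ), Algebra.algebraMap_eq_smul_one]
    rfl
  have hgoal2 : ((Qe : ℍ →L[ℂ] ℍ) - (c⁻¹ : ℂ) • (1 : ℍ →L[ℂ] ℍ)).IsPositive := by
    rw [hQe]
    have h1 : ((c⁻¹ : ℂ)) • (1 : ℍ →L[ℂ] ℍ) = algebraMap ℝ (ℍ →L[ℂ] ℍ) c⁻¹ := by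
      rw [← hsm c⁻¹, Complex.ofReal_inv]
    rw [h1]
    refine (ContinuousLinearMap.nonneg_iff_isPositive _).mp ?_
    have e1 : cfc (fun s : ℝ => Real.sqrt s - c⁻¹) S = Q - algebraMap ℝ (ℍ →L[ℂ] ℍ) c⁻¹ := by
      rw [cfc_sub Real.sqrt (fun _ : ℝ => c⁻¹) S hcont1, cfc_const _ S hSsa, hQdef]
    rw [← e1]
    refine cfc_nonneg fun t ht => ?_
    rw [sub_nonneg]
    calc (c⁻¹ : ℝ) = Real.sqrt (c⁻¹ * c⁻¹) := (Real.sqrt_mul_self (by positivity)).symm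
      _ ≤ Real.sqrt t := Real.sqrt_le_sqrt (hspec_low t ht)
  have hgoal3 : ((c : ℂ) • (1 : ℍ →L[ℂ] ℍ) - (Qe : ℍ →L[ℂ] ℍ)).IsPositive := by
    rw [hQe, hsm c]
    refine (ContinuousLinearMap.nonneg_iff_isPositive _).mp ?_
    have e1 : cfc (fun s : ℝ => c - Real.sqrt s) S = algebraMap ℝ (ℍ →L[ℂ] ℍ) c - Q := by
      rw [cfc_sub (fun _ : ℝ => c) Real.sqrt S (by fun_prop) hcont1, cfc_const _ S hSsa, hQdef]
    rw [← e1]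
    refine cfc_nonneg fun t ht => ?_
    rw [sub_nonneg]
    calc Real.sqrt t ≤ Real.sqrt (c * c) := Real.sqrt_le_sqrt (hspec_up t ht)
      _ = c := Real.sqrt_mul_self hc0.le
  -- the isometry property
  have hnq : ∀ z : ℍ, ‖Q z‖ ^ 2 = (Blim A z z).re := by
    intro z
    have hsym := ContinuousLinearMap.isSelfAdjoint_iff_isSymmetric.mp hQsa
    have h1 : ⟪Q z, Q z⟫ = (starRingEnd ℂ) (Blim A z z) := by
      calc ⟪Q z, Q z⟫ = ⟪z, Q (Q z)⟫ := hsym z (Q z)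
        _ = ⟪z, S z⟫ := by rw [← ContinuousLinearMap.mul_apply, hQQ]
        _ = (starRingEnd ℂ) ⟪S z, z⟫ := (inner_conj_symm _ _).symm
        _ = (starRingEnd ℂ) (Blim A z z) := by rw [hS]
    have h2 : re ⟪Q z, Q z⟫ = ‖Q z‖ ^ 2 := @inner_self_eq_norm_sq ℂ _ _ _ _ (Q z)
    rw [← h2, h1, Complex.conj_re]
  have hgoal4 : ∀ x : ℍ, ‖(Qe * T * Qe⁻¹ : ℍ ≃L[ℂ] ℍ) x‖ = ‖x‖ := by
    intro x
    have happ : (Qe * T * Qe⁻¹ : ℍ ≃L[ℂ] ℍ) x = Q (A (Qi x)) := by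
      have h1 : (Qe * T * Qe⁻¹ : ℍ ≃L[ℂ] ℍ) x = Qe (T (Qe.symm x)) := rfl
      rw [h1, hQesymm]
      calc Qe (T (Qi x)) = (Qe : ℍ →L[ℂ] ℍ) (T (Qi x)) := rfl
        _ = Q (A (Qi x)) := by rw [hQe]; rfl
    have hQQix : Q (Qi x) = x := by
      rw [← ContinuousLinearMap.mul_apply, hQQi, ContinuousLinearMap.one_apply]
    have h2 : ‖(Qe * T * Qe⁻¹ : ℍ ≃L[ℂ] ℍ) x‖ ^ 2 = ‖x‖ ^ 2 := by
      rw [happ, hnq, Blim_shift hA, ← hnq, hQQix]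
    have h3 := congrArg Real.sqrt h2
    rwa [Real.sqrt_sq (norm_nonneg _), Real.sqrt_sq (norm_nonneg _)] at h3
  exact ⟨Qe, hQe ▸ hQpos, hgoal2, hgoal3, hgoal4⟩

end NagyAux

open NagyAux in
/-- Nagy's theorem: if `T` is an invertible bounded operator on a complex Hilbert space with
`‖Tᵏ‖ ≤ c` for all `k ∈ ℤ`, then there is a bounded positive self-adjoint invertible operator
`Q` with `(1/c)·I ≤ Q ≤ c·I` such that `Q T Q⁻¹` is unitary. -/
theorem nagy_theorem
    {ℍ : Type*} [NormedAddCommGroup ℍ] [InnerProductSpace ℂ ℍ] [CompleteSpace ℍ]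
    (T : ℍ ≃L[ℂ] ℍ) (c : ℝ)
    (hT : ∀ k : ℤ, ‖((T ^ k : ℍ ≃L[ℂ] ℍ) : ℍ →L[ℂ] ℍ)‖ ≤ c) :
    ∃ Q : ℍ ≃L[ℂ] ℍ,
      (Q : ℍ →L[ℂ] ℍ).IsPositive ∧
      ((Q : ℍ →L[ℂ] ℍ) - (c⁻¹ : ℂ) • (1 : ℍ →L[ℂ] ℍ)).IsPositive ∧
      ((c : ℂ) • (1 : ℍ →L[ℂ] ℍ) - (Q : ℍ →L[ℂ] ℍ)).IsPositive ∧
      ∀ x : ℍ, ‖(Q * T * Q⁻¹ : ℍ ≃L[ℂ] ℍ) x‖ = ‖x‖ := by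
  rcases subsingleton_or_nontrivial ℍ with hsub | hnt
  · have hpos : ∀ X : ℍ →L[ℂ] ℍ, X.IsPositive := fun X => by
      rw [Subsingleton.elim X 0]
      exact ContinuousLinearMap.isPositive_zero
    exact ⟨1, hpos _, hpos _, hpos _, fun x => by rw [Subsingleton.elim x 0]; simp⟩
  · have hcoepow : ∀ k : ℕ, ((T ^ (k : ℤ) : ℍ ≃L[ℂ] ℍ) : ℍ →L[ℂ] ℍ) = (T : ℍ →L[ℂ] ℍ) ^ k := by
      intro k
      rw [zpow_natCast]
      induction k with
      | zero => rfl
      | succ n ih =>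
        rw [pow_succ, pow_succ, ← ih]
        ext x
        rfl
    have hone : ((1 : ℍ ≃L[ℂ] ℍ) : ℍ →L[ℂ] ℍ) = ContinuousLinearMap.id ℂ ℍ := rfl
    have hc : 1 ≤ c := by
      have h := hT 0
      rw [zpow_zero, hone, ContinuousLinearMap.norm_id] at h
      exact h
    have hA : ∀ k : ℕ, ‖(T : ℍ →L[ℂ] ℍ) ^ k‖ ≤ c := fun k => by
      rw [← hcoepow k]; exact hT k
    have hAinv : ∀ (k : ℕ) (z : ℍ), ‖z‖ ≤ c * ‖((T : ℍ →L[ℂ] ℍ) ^ k) z‖ := by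
      intro k z
      have h2 : (T ^ (-(k : ℤ)) : ℍ ≃L[ℂ] ℍ) * (T ^ (k : ℤ)) = 1 := by
        rw [← zpow_add]; norm_num
      have e1 : (T ^ (-(k : ℤ)) : ℍ ≃L[ℂ] ℍ) ((T ^ (k : ℤ) : ℍ ≃L[ℂ] ℍ) z) = z := by
        calc (T ^ (-(k : ℤ)) : ℍ ≃L[ℂ] ℍ) ((T ^ (k : ℤ)) z)
            = ((T ^ (-(k : ℤ)) : ℍ ≃L[ℂ] ℍ) * (T ^ (k : ℤ))) z := rfl
          _ = z := by rw [h2]; rfl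
      have e2 := ContinuousLinearMap.le_opNorm
        ((T ^ (-(k : ℤ)) : ℍ ≃L[ℂ] ℍ) : ℍ →L[ℂ] ℍ) (((T : ℍ →L[ℂ] ℍ) ^ k) z)
      have e4 : ((T ^ (-(k : ℤ)) : ℍ ≃L[ℂ] ℍ) : ℍ →L[ℂ] ℍ) (((T : ℍ →L[ℂ] ℍ) ^ k) z) = z := by
        rw [← hcoepow k]
        exact e1
      rw [e4] at e2
      exact e2.trans (mul_le_mul_of_nonneg_right (hT _) (norm_nonneg _))
    exact nagy_key T c hc hA hAinv
end

section
/- Let f : ℝ → ℂ be measurable with 0 < α ≤ |f(x)| ≤ β < ∞, and define (TΨ)(x) := f(x)Ψ(-x) on L²(ℝ, dx). Then the powers of T satisfy: for n > 0, (TⁿΨ)(x) = (∏_{k=1}^{n} f((-1)^{k+1}x)) Ψ((-1)ⁿx). Moreover the family {Tⁿ : n ∈ ℤ} is uniformly bounded in operator norm if and only if |f(x)f(-x)| = 1 for almost every x. -/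
/-!
Since `-(-x) = x`, the square of a weighted reflection `Ψ ↦ w · (Ψ ∘ neg)` is multiplication by
`x ↦ w x * w (-x)`. For `T` (`w = f`) this is `g x = f x * f (-x)`, for `S = T⁻¹`
(`w = 1 / f ∘ neg`) it is `g⁻¹`; so even powers are multiplications by `g^(±m)` and odd ones
are `T` or `S` composed with them. If `|g| = 1` a.e. these multiplications are isometries and
the extra factor costs at most `β` resp. `α⁻¹`. Conversely, a multiplication operator bounded
by `C` on `Lᵖ` of a σ-finite measure has its multiplier bounded by `C` a.e. (test it against
indicators of sets of finite measure), so uniform bounds give `|g|^(±m) ≤ C` for all `m`,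
which forces `|g| = 1` a.e.
-/

open MeasureTheory Filter
open scoped ENNReal

def weightedReflection {G R : Type*} [Neg G] [Mul R] (w Ψ : G → R) : G → R :=
  fun x => w x * Ψ (-x)

section Algebra

variable {G R : Type*}

theorem weightedReflection_iterate_apply [Ring G] [CommMonoid R] (w Ψ : G → R) (n : ℕ) (x : G) :
    (weightedReflection w)^[n] Ψ x =
      (∏ k ∈ Finset.Icc 1 n, w ((-1) ^ (k + 1) * x)) * Ψ ((-1) ^ n * x) := by
  induction n generalizing Ψ with
  | zero => simp
  | succ n ih =>
    have hw : (-1 : G) ^ (n + 1 + 1) = (-1) ^ n := by simp [pow_succ]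
    have hΨ : -((-1 : G) ^ n * x) = (-1) ^ (n + 1) * x := by simp [pow_succ]
    rw [Function.iterate_succ_apply, ih, Finset.prod_Icc_succ_top (by omega), weightedReflection,
      hw, hΨ, mul_assoc]

theorem weightedReflection_iterate_two_mul [InvolutiveNeg G] [Monoid R] (w : G → R) (m : ℕ) :
    (weightedReflection w)^[2 * m] = fun Ψ x => (w x * w (-x)) ^ m * Ψ x := by
  induction m with
  | zero => funext Ψ x; simp
  | succ m ih =>
    ext Ψ x
    rw [Nat.mul_succ, Function.iterate_add_apply, ih]
    simp only [Function.iterate_succ_apply, Function.iterate_zero_apply, weightedReflection,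
      neg_neg, pow_succ, mul_assoc]

end Algebra

section Measure

variable {α 𝕜 : Type*} [MeasurableSpace α] [NormedRing 𝕜] {μ : Measure α} {p : ℝ≥0∞}

theorem ae_enorm_le_of_eLpNorm_mul_le [NormOneClass 𝕜] [MeasurableSpace 𝕜]
    [OpensMeasurableSpace 𝕜] [SigmaFinite μ] (hp0 : p ≠ 0) (hp : p ≠ ∞) {m : α → 𝕜}
    (hm : AEMeasurable m μ) {C : ℝ≥0∞}
    (h : ∀ Ψ : α → 𝕜, MemLp Ψ p μ → eLpNorm (fun x => m x * Ψ x) p μ ≤ C * eLpNorm Ψ p μ) :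
    ∀ᵐ x ∂μ, ‖m x‖ₑ ≤ C := by
  have hq : 0 < p.toReal := ENNReal.toReal_pos hp0 hp
  have hpow : ∀ᵐ x ∂μ, ‖m x‖ₑ ^ p.toReal ≤ C ^ p.toReal := by
    refine ae_le_of_forall_setLIntegral_le_of_sigmaFinite₀ (hm.enorm.pow_const _) ?_
    intro s hs hμs
    have hmul : (fun x => m x * s.indicator (fun _ => (1 : 𝕜)) x) = s.indicator m := by
      ext x; by_cases hx : x ∈ s <;> simp [hx]
    have hbound := h _ (memLp_indicator_const p hs 1 (Or.inr hμs.ne))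
    rw [hmul, eLpNorm_indicator_eq_eLpNorm_restrict hs, eLpNorm_indicator_const hs hp0 hp,
      enorm_one, one_mul, eLpNorm_eq_eLpNorm' hp0 hp] at hbound
    calc ∫⁻ x in s, ‖m x‖ₑ ^ p.toReal ∂μ
        = eLpNorm' m p.toReal (μ.restrict s) ^ p.toReal :=
          lintegral_rpow_enorm_eq_rpow_eLpNorm' hq
      _ ≤ (C * μ s ^ (1 / p.toReal)) ^ p.toReal := by gcongr
      _ = ∫⁻ _ in s, C ^ p.toReal ∂μ := by
          rw [setLIntegral_const, ENNReal.mul_rpow_of_nonneg _ _ hq.le, one_div,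
            ENNReal.rpow_inv_rpow hq.ne']
  filter_upwards [hpow] with x hx
  exact (ENNReal.rpow_le_rpow_iff hq).1 hx

theorem eLpNorm_mul_of_ae_norm_eq_one [NormMulClass 𝕜] {u Ψ : α → 𝕜} (hu : ∀ᵐ x ∂μ, ‖u x‖ = 1) :
    eLpNorm (fun x => u x * Ψ x) p μ = eLpNorm Ψ p μ :=
  eLpNorm_congr_norm_ae (by filter_upwards [hu] with x hx; rw [norm_mul, hx, one_mul])

end Measure

theorem ENNReal.le_one_of_forall_pow_le {a C : ℝ≥0∞} (hC : C ≠ ∞) (h : ∀ n : ℕ, a ^ n ≤ C) :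
    a ≤ 1 := by
  by_contra! ha
  obtain ⟨n, hn⟩ := ((ENNReal.tendsto_pow_atTop_nhds_top_iff.2 ha).eventually
    (eventually_gt_nhds hC.lt_top)).exists
  exact (h n).not_gt hn

section Reflection

variable {G 𝕜 : Type*} [MeasurableSpace G] [InvolutiveNeg G] [MeasurableNeg G] {μ : Measure G}
  [NormedDivisionRing 𝕜] {p : ℝ≥0∞}

theorem eLpNorm_comp_neg [μ.IsNegInvariant] {E : Type*} [NormedAddCommGroup E] (Ψ : G → E) :
    eLpNorm (fun x => Ψ (-x)) p μ = eLpNorm Ψ p μ := by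
  conv_rhs => rw [← Measure.map_neg_eq_self μ]
  exact ((MeasurableEquiv.neg G).measurableEmbedding.eLpNorm_map_measure).symm

theorem eLpNorm_weightedReflection_le [μ.IsNegInvariant] {w : G → 𝕜} {c : ℝ}
    (hw : ∀ᵐ x ∂μ, ‖w x‖ ≤ c) (Ψ : G → 𝕜) :
    eLpNorm (weightedReflection w Ψ) p μ ≤ ENNReal.ofReal c * eLpNorm Ψ p μ := by
  rw [← eLpNorm_comp_neg Ψ]
  refine eLpNorm_le_mul_eLpNorm_of_ae_le_mul ?_ p
  filter_upwards [hw] with x hx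
  rw [weightedReflection, norm_mul]
  gcongr

theorem eLpNorm_weightedReflection_iterate_le [μ.IsNegInvariant] {w : G → 𝕜}
    (hw : ∀ᵐ x ∂μ, ‖w x * w (-x)‖ = 1) {c : ℝ} (hc : 1 ≤ c) (hwc : ∀ᵐ x ∂μ, ‖w x‖ ≤ c)
    (n : ℕ) (Ψ : G → 𝕜) :
    eLpNorm ((weightedReflection w)^[n] Ψ) p μ ≤ ENNReal.ofReal c * eLpNorm Ψ p μ := by
  have hpow (m : ℕ) : ∀ᵐ x ∂μ, ‖(w x * w (-x)) ^ m‖ = 1 := by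
    filter_upwards [hw] with x hx
    rw [norm_pow, hx, one_pow]
  obtain ⟨m, rfl | rfl⟩ := Nat.even_or_odd' n
  · rw [weightedReflection_iterate_two_mul, eLpNorm_mul_of_ae_norm_eq_one (hpow m)]
    exact le_mul_of_one_le_left' (ENNReal.one_le_ofReal.2 hc)
  · rw [Function.iterate_succ_apply, weightedReflection_iterate_two_mul,
      eLpNorm_mul_of_ae_norm_eq_one (hpow m)]
    exact eLpNorm_weightedReflection_le hwc Ψ

theorem ae_norm_mul_neg_le_one_of_iterate_le [MeasurableSpace 𝕜] [BorelSpace 𝕜]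
    [SecondCountableTopology 𝕜] [SigmaFinite μ] (hp0 : p ≠ 0) (hp : p ≠ ∞) {w : G → 𝕜}
    (hw : Measurable w) {C : ℝ≥0∞} (hC : C ≠ ∞)
    (h : ∀ n : ℕ, ∀ Ψ : G → 𝕜, MemLp Ψ p μ →
      eLpNorm ((weightedReflection w)^[n] Ψ) p μ ≤ C * eLpNorm Ψ p μ) :
    ∀ᵐ x ∂μ, ‖w x * w (-x)‖ ≤ 1 := by
  have hg : Measurable fun x => w x * w (-x) := hw.mul (hw.comp measurable_neg)
  have hpow (n : ℕ) : ∀ᵐ x ∂μ, ‖w x * w (-x)‖ₑ ^ n ≤ C := by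
    have := ae_enorm_le_of_eLpNorm_mul_le hp0 hp (hg.pow_const n).aemeasurable fun Ψ hΨ => by
      simpa only [weightedReflection_iterate_two_mul] using h (2 * n) Ψ hΨ
    simpa only [enorm_pow] using this
  filter_upwards [ae_all_iff.2 hpow] with x hx
  rw [← ENNReal.ofReal_le_one, ofReal_norm]
  exact ENNReal.le_one_of_forall_pow_le hC hx

end Reflection

/-- For `(TΨ)(x) = f(x)Ψ(-x)` on `L²(ℝ)` with `0 < α ≤ |f| ≤ β < ∞`: the positive powers are
`(TⁿΨ)(x) = (∏_{k=1}^{n} f((-1)^{k+1}x)) Ψ((-1)ⁿx)`, and the family `{Tⁿ : n ∈ ℤ}` (with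
`T⁻¹ = S`, `(SΨ)(x) = f(-x)⁻¹Ψ(-x)`) is uniformly bounded in operator norm on `L²(ℝ)` if and
only if `|f(x)f(-x)| = 1` for almost every `x`. -/
theorem parity_times_multiplication_powers_and_nagy
    (f : ℝ → ℂ) (α β : ℝ) (hmeas : Measurable f)
    (hα : 0 < α) (hlb : ∀ x, α ≤ ‖f x‖) (hub : ∀ x, ‖f x‖ ≤ β)
    (T S : (ℝ → ℂ) → (ℝ → ℂ))
    (hT : T = fun Ψ x => f x * Ψ (-x))
    (hS : S = fun Ψ x => (f (-x))⁻¹ * Ψ (-x)) :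
    -- formula for positive powers
    (∀ n : ℕ, 0 < n → ∀ Ψ : ℝ → ℂ, ∀ x : ℝ,
      T^[n] Ψ x = (∏ k ∈ Finset.Icc 1 n, f ((-1 : ℝ) ^ (k + 1) * x)) * Ψ ((-1 : ℝ) ^ n * x)) ∧
    -- uniform boundedness iff |f(x)f(-x)| = 1 a.e.
    ((∃ c : ℝ, ∀ n : ℕ, ∀ Ψ : ℝ → ℂ, MemLp Ψ 2 (volume : Measure ℝ) →
        eLpNorm (T^[n] Ψ) 2 volume ≤ ENNReal.ofReal c * eLpNorm Ψ 2 volume ∧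
        eLpNorm (S^[n] Ψ) 2 volume ≤ ENNReal.ofReal c * eLpNorm Ψ 2 volume) ↔
      (∀ᵐ x : ℝ ∂volume, ‖f x * f (-x)‖ = 1)) := by
  change T = weightedReflection f at hT
  change S = weightedReflection (fun x => (f (-x))⁻¹) at hS
  subst hT hS
  have hf0 (x : ℝ) : f x ≠ 0 := norm_pos_iff.1 (hα.trans_le (hlb x))
  have hSsym (x : ℝ) : ‖(f (-x))⁻¹ * (f (- -x))⁻¹‖ = ‖f x * f (-x)‖⁻¹ := by
    rw [neg_neg, ← mul_inv_rev, norm_inv]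
  refine ⟨fun n _ Ψ x => weightedReflection_iterate_apply f Ψ n x, ⟨?_, ?_⟩⟩
  · rintro ⟨c, hc⟩
    have hT1 := ae_norm_mul_neg_le_one_of_iterate_le two_ne_zero ENNReal.ofNat_ne_top hmeas
      ENNReal.ofReal_ne_top fun n Ψ hΨ => (hc n Ψ hΨ).1
    have hS1 := ae_norm_mul_neg_le_one_of_iterate_le (w := fun x => (f (-x))⁻¹) two_ne_zero
      ENNReal.ofNat_ne_top (by fun_prop) ENNReal.ofReal_ne_top fun n Ψ hΨ => (hc n Ψ hΨ).2
    filter_upwards [hT1, hS1] with x hxT hxS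
    have hpos : 0 < ‖f x * f (-x)‖ := norm_pos_iff.2 (mul_ne_zero (hf0 x) (hf0 (-x)))
    rw [hSsym, inv_le_one₀ hpos] at hxS
    exact le_antisymm hxT hxS
  · intro hae
    refine ⟨max 1 (max β α⁻¹), fun n Ψ _ => ⟨?_, ?_⟩⟩
    · refine eLpNorm_weightedReflection_iterate_le hae (le_max_left _ _) ?_ n Ψ
      exact .of_forall fun x => (hub x).trans ((le_max_left _ _).trans (le_max_right _ _))
    · refine eLpNorm_weightedReflection_iterate_le ?_ (le_max_left _ _) ?_ n Ψ
      · filter_upwards [hae] with x hx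
        rw [hSsym, hx, inv_one]
      · refine .of_forall fun x => ?_
        rw [norm_inv]
        exact (inv_anti₀ hα (hlb _)).trans ((le_max_right _ _).trans (le_max_right _ _))
end

section
/- Let μ : ℝ → ℝ satisfy 0 < μ₁ ≤ μ(x) ≤ μ₂ < ∞ and φ : ℝ → ℝ be measurable, and set f(x) = (μ(x)/μ(-x)) e^{iφ(x)}. Define (TΨ)(x) = f(x)Ψ(-x) on L²(ℝ) and Q² = (1/2)(1 + μ²(-x)/μ²(x)) (multiplication operator). Then Q is bounded, positive, invertible, the inner product h_T(Φ,Ψ) := ⟪Q²Φ, Ψ⟫ is T-invariant, and QTQ⁻¹ equals the operator Ψ(x) ↦ e^{iφ(x)}Ψ(-x), which is unitary on L²(ℝ). -/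
open MeasureTheory

/-!
Everything rests on the identity `q(-x) = q(x) · (μ(x)/μ(-x))²` together with `|e^{iφ}| = 1`:
pointwise, the integrand of `h_T(TΦ, TΨ)` is that of `h_T(Φ, Ψ)` evaluated at `-x`, and Lebesgue
measure is invariant under `x ↦ -x`; likewise `√q(-x) = √q(x) · μ(x)/μ(-x)` makes the modulus of
`f` cancel in `QTQ⁻¹`.
-/

open ComplexConjugate

lemma one_add_sq_div_sq_div_two_eq {K : Type*} [Field K] {a b : K} (ha : a ≠ 0) (hb : b ≠ 0) :
    (1 + a ^ 2 / b ^ 2) / 2 = (1 + b ^ 2 / a ^ 2) / 2 * (a / b) ^ 2 := by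
  field_simp
  ring

lemma sq_div_sq_mem_Icc {m M a b : ℝ} (hm : 0 < m) (ha : a ∈ Set.Icc m M) (hb : b ∈ Set.Icc m M) :
    a ^ 2 / b ^ 2 ∈ Set.Icc (m ^ 2 / M ^ 2) (M ^ 2 / m ^ 2) := by
  have ha₀ : 0 ≤ a := hm.le.trans ha.1
  have hb₀ : 0 < b := hm.trans_le hb.1
  exact ⟨div_le_div₀ (by positivity) (pow_le_pow_left₀ hm.le ha.1 2) (by positivity)
      (pow_le_pow_left₀ hb₀.le hb.2 2),
    div_le_div₀ (by positivity) (pow_le_pow_left₀ ha₀ ha.2 2) (by positivity)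
      (pow_le_pow_left₀ hm.le hb.1 2)⟩

lemma sqrt_mul_mul_inv_sqrt_mul_sq {a r : ℝ} (ha : 0 < a) (hr : 0 < r) :
    √a * r * (√(a * r ^ 2))⁻¹ = 1 := by
  rw [Real.sqrt_mul ha.le, Real.sqrt_sq hr.le]
  exact mul_inv_cancel₀ (by positivity)

lemma integral_weighted_reflection_eq {G : Type*} [AddGroup G] [MeasurableSpace G]
    [MeasurableNeg G] (ν : Measure G) [ν.IsNegInvariant] (q : G → ℝ) (w Φ Ψ : G → ℂ)
    (hq : ∀ x, q (-x) = q x * ‖w x‖ ^ 2) :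
    ∫ x, (q x : ℂ) * conj (w x * Φ (-x)) * (w x * Ψ (-x)) ∂ν
      = ∫ x, (q x : ℂ) * conj (Φ x) * Ψ x ∂ν := by
  conv_rhs => rw [← integral_neg_eq_self _ ν]
  congr 1
  funext x
  rw [hq, map_mul, Complex.ofReal_mul, Complex.ofReal_pow, ← Complex.conj_mul']
  ring

lemma bijective_weighted_reflection {α K : Type*} [InvolutiveNeg α] [GroupWithZero K]
    (u : α → K) (hu : ∀ x, u x ≠ 0) :
    Function.Bijective fun (Ψ : α → K) x => u x * Ψ (-x) := by
  refine Function.bijective_iff_has_inverse.mpr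
    ⟨fun Ψ x => (u (-x))⁻¹ * Ψ (-x), fun Ψ => ?_, fun Ψ => ?_⟩ <;>
  · funext x
    simp only [neg_neg, ← mul_assoc, inv_mul_cancel₀, mul_inv_cancel₀, hu, ne_eq,
      not_false_eq_true, one_mul]

theorem parity_example_invariant_metric_and_unitary_general
    (μ φ : ℝ → ℝ) (μ₁ μ₂ : ℝ)
    (hμ₁ : 0 < μ₁) (hlb : ∀ x, μ₁ ≤ μ x) (hub : ∀ x, μ x ≤ μ₂)
    (f : ℝ → ℂ) (hf : f = fun x => ((μ x / μ (-x) : ℝ) : ℂ) * Complex.exp (Complex.I * φ x))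
    (T : (ℝ → ℂ) → (ℝ → ℂ)) (hT : T = fun Ψ x => f x * Ψ (-x))
    (q : ℝ → ℝ) (hq : q = fun x => (1 + μ (-x) ^ 2 / μ x ^ 2) / 2)
    (V : (ℝ → ℂ) → (ℝ → ℂ)) (hV : V = fun Ψ x => Complex.exp (Complex.I * φ x) * Ψ (-x)) :
    -- Q² is bounded, positive and invertible as a multiplication operator
    (∃ m M : ℝ, 0 < m ∧ ∀ x, m ≤ q x ∧ q x ≤ M) ∧
    -- h_T(Φ,Ψ) = ⟪Q²Φ,Ψ⟫ is T-invariant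
    (∀ Φ Ψ : ℝ → ℂ, MemLp Φ 2 (volume : Measure ℝ) → MemLp Ψ 2 (volume : Measure ℝ) →
      ∫ x : ℝ, (q x : ℂ) * (starRingEnd ℂ) (T Φ x) * T Ψ x
        = ∫ x : ℝ, (q x : ℂ) * (starRingEnd ℂ) (Φ x) * Ψ x) ∧
    -- Q T Q⁻¹ = e^{iφ} P
    (∀ Ψ : ℝ → ℂ, ∀ x : ℝ,
      (Real.sqrt (q x) : ℂ) * T (fun y => ((Real.sqrt (q y))⁻¹ : ℝ) * Ψ y) x = V Ψ x) ∧
    -- e^{iφ} P is unitary on L²(ℝ)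
    (∀ Φ Ψ : ℝ → ℂ, MemLp Φ 2 (volume : Measure ℝ) → MemLp Ψ 2 (volume : Measure ℝ) →
      ∫ x : ℝ, (starRingEnd ℂ) (V Φ x) * V Ψ x = ∫ x : ℝ, (starRingEnd ℂ) (Φ x) * Ψ x) ∧
    Function.Bijective V := by
  subst hf hT hq hV
  have hmem : ∀ x, μ x ∈ Set.Icc μ₁ μ₂ := fun x => ⟨hlb x, hub x⟩
  have hpos : ∀ x, 0 < μ x := fun x => hμ₁.trans_le (hlb x)
  have hq_pos : ∀ x, 0 < (1 + μ (-x) ^ 2 / μ x ^ 2) / 2 := fun x => by positivity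
  have hq_neg : ∀ x, (1 + μ x ^ 2 / μ (-x) ^ 2) / 2
      = (1 + μ (-x) ^ 2 / μ x ^ 2) / 2 * (μ x / μ (-x)) ^ 2 := fun x =>
    one_add_sq_div_sq_div_two_eq (hpos x).ne' (hpos (-x)).ne'
  refine ⟨⟨(1 + μ₁ ^ 2 / μ₂ ^ 2) / 2, (1 + μ₂ ^ 2 / μ₁ ^ 2) / 2, by positivity, fun x => ?_⟩,
    fun Φ Ψ _ _ => ?_, fun Ψ x => ?_, fun Φ Ψ _ _ => ?_,
    bijective_weighted_reflection _ fun x => Complex.exp_ne_zero _⟩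
  · have h := sq_div_sq_mem_Icc hμ₁ (hmem (-x)) (hmem x)
    constructor <;> linarith [h.1, h.2]
  · refine integral_weighted_reflection_eq volume _ _ Φ Ψ fun x => ?_
    simp only [neg_neg, hq_neg x, norm_mul, Complex.norm_exp_I_mul_ofReal, mul_one,
      Complex.norm_real, Real.norm_eq_abs, sq_abs]
  · simp only [neg_neg, hq_neg x]
    calc _ = ((√((1 + μ (-x) ^ 2 / μ x ^ 2) / 2) * (μ x / μ (-x))
            * (√((1 + μ (-x) ^ 2 / μ x ^ 2) / 2 * (μ x / μ (-x)) ^ 2))⁻¹ : ℝ) : ℂ)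
            * (Complex.exp (Complex.I * φ x) * Ψ (-x)) := by push_cast; ring
      _ = _ := by
        rw [sqrt_mul_mul_inv_sqrt_mul_sq (hq_pos x) (div_pos (hpos x) (hpos (-x))),
          Complex.ofReal_one, one_mul]
  · simpa using integral_weighted_reflection_eq volume (fun _ => 1)
      (fun x => Complex.exp (Complex.I * φ x)) Φ Ψ fun x => by simp

/-- For `f(x) = (μ(x)/μ(-x)) e^{iφ(x)}`, `(TΨ)(x) = f(x)Ψ(-x)` on `L²(ℝ)` and
`Q² = (1/2)(1 + μ²(-x)/μ²(x))` (multiplication operator): `Q²` is bounded, positive and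
invertible, the form `h_T(Φ,Ψ) = ⟪Q²Φ, Ψ⟫` is `T`-invariant, and `QTQ⁻¹` is the operator
`Ψ(x) ↦ e^{iφ(x)}Ψ(-x)`, which is unitary on `L²(ℝ)`. -/
theorem parity_example_invariant_metric_and_unitary
    (μ φ : ℝ → ℝ) (μ₁ μ₂ : ℝ) (hμmeas : Measurable μ) (hφmeas : Measurable φ)
    (hμ₁ : 0 < μ₁) (hlb : ∀ x, μ₁ ≤ μ x) (hub : ∀ x, μ x ≤ μ₂)
    (f : ℝ → ℂ) (hf : f = fun x => ((μ x / μ (-x) : ℝ) : ℂ) * Complex.exp (Complex.I * φ x))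
    (T : (ℝ → ℂ) → (ℝ → ℂ)) (hT : T = fun Ψ x => f x * Ψ (-x))
    (q : ℝ → ℝ) (hq : q = fun x => (1 + μ (-x) ^ 2 / μ x ^ 2) / 2)
    (V : (ℝ → ℂ) → (ℝ → ℂ)) (hV : V = fun Ψ x => Complex.exp (Complex.I * φ x) * Ψ (-x)) :
    -- Q² is bounded, positive and invertible as a multiplication operator
    (∃ m M : ℝ, 0 < m ∧ ∀ x, m ≤ q x ∧ q x ≤ M) ∧
    -- h_T(Φ,Ψ) = ⟪Q²Φ,Ψ⟫ is T-invariant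
    (∀ Φ Ψ : ℝ → ℂ, MemLp Φ 2 (volume : Measure ℝ) → MemLp Ψ 2 (volume : Measure ℝ) →
      ∫ x : ℝ, (q x : ℂ) * (starRingEnd ℂ) (T Φ x) * T Ψ x
        = ∫ x : ℝ, (q x : ℂ) * (starRingEnd ℂ) (Φ x) * Ψ x) ∧
    -- Q T Q⁻¹ = e^{iφ} P
    (∀ Ψ : ℝ → ℂ, ∀ x : ℝ,
      (Real.sqrt (q x) : ℂ) * T (fun y => ((Real.sqrt (q y))⁻¹ : ℝ) * Ψ y) x = V Ψ x) ∧
    -- e^{iφ} P is unitary on L²(ℝ)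
    (∀ Φ Ψ : ℝ → ℂ, MemLp Φ 2 (volume : Measure ℝ) → MemLp Ψ 2 (volume : Measure ℝ) →
      ∫ x : ℝ, (starRingEnd ℂ) (V Φ x) * V Ψ x = ∫ x : ℝ, (starRingEnd ℂ) (Φ x) * Ψ x) ∧
    Function.Bijective V :=
  parity_example_invariant_metric_and_unitary_general μ φ μ₁ μ₂ hμ₁ hlb hub f hf T hT q hq V hV
end

section
/- Let T = Q⁻¹UQ with U unitary on a complex Hilbert space and Q bounded positive invertible, and let φ : [0,2π] → ℝ be a bounded measurable function with 0 < c ≤ φ. Writing B = ∫₀^{2π} φ(λ) dE_λ^U for the spectral integral of U, the form h_φ(x,y) := ⟪Qx, B Q y⟫ is a T-invariant positive-definite Hermitian inner product, and h_φ(x,y) = h_T(C_φ x, y) where h_T(x,y) = ⟪Q²x,y⟫ and C_φ = Q⁻¹BQ commutes with T. -/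
/-!
`Q` intertwines `T` with `U` (`Q ∘ T = U ∘ Q`), so `h_φ(Tx, Ty) = ⟪UQx, BUQy⟫ = ⟪Qx, BQy⟫`
because `B` commutes with `U` and `U` preserves the inner product. Since `B ≥ c > 0`, `B` is
self-adjoint; moving the self-adjoint operators `B` and `Q` across the inner product gives Hermitian
symmetry and `h_φ(x, y) = ⟪QBQx, y⟫ = ⟪Q²C_φ x, y⟫`, while `re ⟪Qx, BQx⟫ ≥ c‖Qx‖²` gives
definiteness. Finally `C_φ` and `T` are the conjugates by `Q` of the commuting operators `B`, `U`.
-/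

open ContinuousLinearMap
local notation "⟪" x ", " y "⟫" => @inner ℂ _ _ x y

open scoped InnerProductSpace ComplexConjugate

namespace ContinuousLinearMap

variable {𝕜 E : Type*} [RCLike 𝕜] [NormedAddCommGroup E] [InnerProductSpace 𝕜 E]

theorem IsPositive.of_isPositive_sub_smul_one {B : E →L[𝕜] E} {c : ℝ} (hc : 0 ≤ c)
    (hB : (B - (c : 𝕜) • 1).IsPositive) : B.IsPositive := by
  simpa using hB.add (isPositive_one.smul_of_nonneg (RCLike.ofReal_nonneg.mpr hc))

theorem mul_norm_sq_le_re_inner_of_isPositive_sub_smul_one {B : E →L[𝕜] E} {c : ℝ}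
    (hB : (B - (c : 𝕜) • 1).IsPositive) (x : E) : c * ‖x‖ ^ 2 ≤ RCLike.re ⟪x, B x⟫_𝕜 := by
  have h := hB.re_inner_nonneg_right x
  rw [sub_apply, smul_apply, one_apply_eq_self, inner_sub_right, inner_smul_right,
    inner_self_eq_norm_sq_to_K, map_sub, ← RCLike.ofReal_pow, ← RCLike.ofReal_mul,
    RCLike.ofReal_re] at h
  linarith

theorem re_inner_pos_of_isPositive_sub_smul_one {B : E →L[𝕜] E} {c : ℝ} (hc : 0 < c)
    (hB : (B - (c : 𝕜) • 1).IsPositive) {x : E} (hx : x ≠ 0) : 0 < RCLike.re ⟪x, B x⟫_𝕜 := by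
  have : 0 < c * ‖x‖ ^ 2 := by positivity
  exact this.trans_le (mul_norm_sq_le_re_inner_of_isPositive_sub_smul_one hB x)

theorem inner_map_apply_map_of_commute {U B : E →L[𝕜] E} (hU : ∀ x y, ⟪U x, U y⟫_𝕜 = ⟪x, y⟫_𝕜)
    (hBU : Commute B U) (x y : E) : ⟪U x, B (U y)⟫_𝕜 = ⟪x, B y⟫_𝕜 := by
  rw [show B (U y) = U (B y) from DFunLike.congr_fun hBU.eq y, hU]

end ContinuousLinearMap

theorem spectral_family_of_invariant_metrics_general
    {ℍ : Type*} [NormedAddCommGroup ℍ] [InnerProductSpace ℂ ℍ]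
    (U Q : ℍ ≃L[ℂ] ℍ) (B : ℍ →L[ℂ] ℍ) (c : ℝ)
    (hU : ∀ x y : ℍ, ⟪U x, U y⟫ = ⟪x, y⟫)
    (hQ : (Q : ℍ →L[ℂ] ℍ).IsPositive)
    (hc : 0 < c)
    (hBlb : (B - (c : ℂ) • (1 : ℍ →L[ℂ] ℍ)).IsPositive)
    (hBU : B.comp (U : ℍ →L[ℂ] ℍ) = (U : ℍ →L[ℂ] ℍ).comp B)
    (T : ℍ ≃L[ℂ] ℍ) (hT : T = Q⁻¹ * U * Q)
    (hφ : ℍ → ℍ → ℂ) (hhφ : hφ = fun x y => ⟪Q x, B (Q y)⟫)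
    (Cφ : ℍ →L[ℂ] ℍ) (hCφ : Cφ = (Q⁻¹ : ℍ ≃L[ℂ] ℍ) ∘L B ∘L (Q : ℍ →L[ℂ] ℍ)) :
    -- Hermitian symmetry
    (∀ x y : ℍ, (starRingEnd ℂ) (hφ x y) = hφ y x) ∧
    -- positive-definiteness
    (∀ x : ℍ, x ≠ 0 → 0 < (hφ x x).re ∧ (hφ x x).im = 0) ∧
    -- T-invariance
    (∀ x y : ℍ, hφ (T x) (T y) = hφ x y) ∧
    -- h_φ(x,y) = h_T(C_φ x, y) with h_T(x,y) = ⟪Q²x, y⟫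
    (∀ x y : ℍ, hφ x y = ⟪Q (Q (Cφ x)), y⟫) ∧
    -- C_φ commutes with T
    Cφ ∘L (T : ℍ →L[ℂ] ℍ) = (T : ℍ →L[ℂ] ℍ) ∘L Cφ := by
  have hB := (IsPositive.of_isPositive_sub_smul_one hc.le hBlb).isSymmetric
  have hQT : ∀ x, Q (T x) = U (Q x) := fun x => by subst hT; exact Q.apply_symm_apply _
  have hTconj : (T : ℍ →L[ℂ] ℍ) = Q.symm.conjContinuousAlgEquiv U := by subst hT; rfl
  subst hhφ hCφ
  have hsymm : ∀ x y : ℍ, conj ⟪Q x, B (Q y)⟫ = ⟪Q y, B (Q x)⟫ := fun x y => by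
    rw [inner_conj_symm]; exact hB _ _
  refine ⟨hsymm, fun x hx => ⟨?_, Complex.conj_eq_iff_im.mp (hsymm x x)⟩, fun x y => ?_,
    fun x y => ?_, ?_⟩
  · exact re_inner_pos_of_isPositive_sub_smul_one hc hBlb (Q.map_ne_zero_iff.mpr hx)
  · dsimp only
    rw [hQT, hQT]
    exact inner_map_apply_map_of_commute hU hBU _ _
  · calc ⟪Q x, B (Q y)⟫ = ⟪B (Q x), Q y⟫ := (hB _ _).symm
      _ = ⟪Q (B (Q x)), y⟫ := (hQ.isSymmetric _ _).symm
      _ = ⟪Q (Q (Q.symm (B (Q x)))), y⟫ := by rw [Q.apply_symm_apply]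
  · rw [hTconj]
    have hBU' : Commute B (U : ℍ →L[ℂ] ℍ) := hBU
    exact (hBU'.map Q.symm.conjContinuousAlgEquiv).eq

/-- Let `T = Q⁻¹UQ` with `U` unitary and `Q` bounded positive invertible, and let `B` be a
bounded positive operator with `B ≥ c·I` (`c > 0`) commuting with `U` (playing the role of
the spectral integral `∫ φ(λ) dE_λ^U` of a function `φ ≥ c`). Then
`h_φ(x,y) := ⟪Qx, BQy⟫` is a `T`-invariant positive-definite Hermitian inner product, and
`h_φ(x,y) = h_T(C_φ x, y)` where `h_T(x,y) = ⟪Q²x,y⟫` and `C_φ = Q⁻¹BQ` commutes with `T`. -/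
theorem spectral_family_of_invariant_metrics
    {ℍ : Type*} [NormedAddCommGroup ℍ] [InnerProductSpace ℂ ℍ] [CompleteSpace ℍ]
    (U Q : ℍ ≃L[ℂ] ℍ) (B : ℍ →L[ℂ] ℍ) (c : ℝ)
    (hU : ∀ x y : ℍ, ⟪U x, U y⟫ = ⟪x, y⟫)
    (hQ : (Q : ℍ →L[ℂ] ℍ).IsPositive)
    (hc : 0 < c)
    (hBpos : B.IsPositive)
    (hBlb : (B - (c : ℂ) • (1 : ℍ →L[ℂ] ℍ)).IsPositive)
    (hBU : B.comp (U : ℍ →L[ℂ] ℍ) = (U : ℍ →L[ℂ] ℍ).comp B)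
    (T : ℍ ≃L[ℂ] ℍ) (hT : T = Q⁻¹ * U * Q)
    (hφ : ℍ → ℍ → ℂ) (hhφ : hφ = fun x y => ⟪Q x, B (Q y)⟫)
    (Cφ : ℍ →L[ℂ] ℍ) (hCφ : Cφ = (Q⁻¹ : ℍ ≃L[ℂ] ℍ) ∘L B ∘L (Q : ℍ →L[ℂ] ℍ)) :
    -- Hermitian symmetry
    (∀ x y : ℍ, (starRingEnd ℂ) (hφ x y) = hφ y x) ∧
    -- positive-definiteness
    (∀ x : ℍ, x ≠ 0 → 0 < (hφ x x).re ∧ (hφ x x).im = 0) ∧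
    -- T-invariance
    (∀ x y : ℍ, hφ (T x) (T y) = hφ x y) ∧
    -- h_φ(x,y) = h_T(C_φ x, y) with h_T(x,y) = ⟪Q²x, y⟫
    (∀ x y : ℍ, hφ x y = ⟪Q (Q (Cφ x)), y⟫) ∧
    -- C_φ commutes with T
    Cφ ∘L (T : ℍ →L[ℂ] ℍ) = (T : ℍ →L[ℂ] ℍ) ∘L Cφ :=
  spectral_family_of_invariant_metrics_general U Q B c hU hQ hc hBlb hBU T hT hφ hhφ Cφ hCφ
end

section
/- Let T₁, T₂ be commuting invertible bounded operators on a Hilbert space, and suppose h₁ is a T₁-invariant inner product (equivalent to the original). If the commutant of T₁ is abelian (T₁ is multiplicity free), then h₁ is also T₂-invariant. -/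
open ContinuousLinearMap
local notation "⟪" x ", " y "⟫" => @inner ℂ _ _ x y

/-!
Write `h₁(x, y) = ⟪P x, y⟫`. Invariance under `T₁` says `T₁⋆ P T₁ = P`, i.e.
`T₁ = P⁻¹ (T₁⋆)⁻¹ P`, so `Q = P⁻¹ T₂⋆ P` commutes with `T₁` (as `T₂⋆` commutes with `T₁⋆`), hence
with `T₂` because the commutant of `T₁` is abelian. Then `Q T₂ = P⁻¹ (T₂⋆ P T₂)` has uniformly
bounded integer powers, and so does its conjugate `P^{1/2} (Q T₂) P^{-1/2} = P^{-1/2} T₂⋆ P T₂ P^{-1/2}`,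
which is positive. By the C⋆-identity a self-adjoint power-bounded element has norm at most `1`,
so a positive power-bounded unit `a` satisfies `a ≤ 1` and `a⁻¹ ≤ 1`, i.e. `a = 1`.
Hence `T₂⋆ P T₂ = P`.
-/

lemma IsSelfAdjoint.norm_le_one_of_bounded_pow {A : Type*} [NormedRing A] [StarRing A]
    [CStarRing A] {a : A} (ha : IsSelfAdjoint a) {C : ℝ} (hC : ∀ n : ℕ, ‖a ^ n‖ ≤ C) :
    ‖a‖ ≤ 1 := by
  by_contra! h
  obtain ⟨n, hn⟩ := pow_unbounded_of_one_lt C h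
  have := pow_le_pow_right₀ h.le (Nat.lt_two_pow_self (n := n)).le
  linarith [hC (2 ^ n), ha.norm_pow_two_pow n]

def Units.IsPowerBounded {A : Type*} [NormedRing A] (u : Aˣ) : Prop :=
  ∃ C, ∀ k : ℤ, ‖((u ^ k : Aˣ) : A)‖ ≤ C

namespace Units.IsPowerBounded

variable {A : Type*} [NormedRing A] {u v : Aˣ}

lemma mul_of_commute (hu : u.IsPowerBounded) (hv : v.IsPowerBounded) (h : Commute u v) :
    (u * v).IsPowerBounded := by
  obtain ⟨C, hC⟩ := hu
  obtain ⟨D, hD⟩ := hv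
  refine ⟨C * D, fun k => ?_⟩
  rw [h.mul_zpow, Units.val_mul]
  exact (norm_mul_le _ _).trans
    (mul_le_mul (hC k) (hD k) (norm_nonneg _) ((norm_nonneg _).trans (hC 0)))

lemma conj (hu : u.IsPowerBounded) (s : Aˣ) : (s * u * s⁻¹).IsPowerBounded := by
  obtain ⟨C, hC⟩ := hu
  refine ⟨‖(s : A)‖ * C * ‖((s⁻¹ : Aˣ) : A)‖, fun k => ?_⟩
  rw [conj_zpow, Units.val_mul, Units.val_mul]
  refine norm_mul₃_le.trans ?_
  gcongr
  exact hC k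

lemma inv (hu : u.IsPowerBounded) : u⁻¹.IsPowerBounded :=
  let ⟨C, hC⟩ := hu
  ⟨C, fun k => by simpa only [inv_zpow'] using hC (-k)⟩

lemma norm_le_one [StarRing A] [CStarRing A] (hu : u.IsPowerBounded)
    (hu_sa : IsSelfAdjoint (u : A)) : ‖(u : A)‖ ≤ 1 :=
  let ⟨C, hC⟩ := hu
  hu_sa.norm_le_one_of_bounded_pow (C := C) fun n => by simpa using hC n

end Units.IsPowerBounded

section CStarAlgebra

variable {A : Type*} [CStarAlgebra A] [PartialOrder A] [StarOrderedRing A]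

lemma Units.IsPowerBounded.eq_one_of_nonneg {u : Aˣ} (hu : u.IsPowerBounded)
    (hu₀ : 0 ≤ (u : A)) : u = 1 := by
  have hinv₀ : 0 ≤ ((u⁻¹ : Aˣ) : A) := CFC.inv_nonneg_of_nonneg u
  have hle : (u : A) ≤ 1 :=
    (CStarAlgebra.norm_le_one_iff_of_nonneg _).mp (hu.norm_le_one (.of_nonneg hu₀))
  have hinv_le : ((u⁻¹ : Aˣ) : A) ≤ 1 :=
    (CStarAlgebra.norm_le_one_iff_of_nonneg _).mp (hu.inv.norm_le_one (.of_nonneg hinv₀))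
  exact Units.ext (le_antisymm hle ((CStarAlgebra.inv_le_one_iff_one_le hu₀).mp hinv_le))

lemma Units.IsPowerBounded.eq_of_inv_mul {p a : Aˣ} (hp : 0 ≤ (p : A)) (ha : 0 ≤ (a : A))
    (h : (p⁻¹ * a).IsPowerBounded) : a = p := by
  obtain ⟨s, hs⟩ : IsUnit (CFC.sqrt (p : A)) := (CFC.isUnit_sqrt_iff _).mpr p.isUnit
  have hss : s * s = p := Units.ext (by simp [hs, CFC.sqrt_mul_sqrt_self _ hp])
  have hs_star : star s = s :=
    Units.ext (by rw [Units.coe_star, hs, (CFC.sqrt_nonneg _).isSelfAdjoint.star_eq])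
  have hconj : s * (p⁻¹ * a) * s⁻¹ = star s⁻¹ * a * s⁻¹ := by
    rw [star_inv, hs_star, ← hss]; group
  have hconj_one := (h.conj s).eq_one_of_nonneg (by
    rw [hconj, Units.val_mul, Units.val_mul, Units.coe_star]
    exact star_left_conjugate_nonneg ha _)
  rw [hconj, star_inv, hs_star] at hconj_one
  calc a = s * (s⁻¹ * a * s⁻¹) * s := by group
    _ = p := by rw [hconj_one, mul_one, hss]

end CStarAlgebra

lemma Units.IsPowerBounded.star {A : Type*} [NormedRing A] [StarRing A] [NormedStarGroup A]
    {u : Aˣ} (hu : u.IsPowerBounded) :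
    (star u).IsPowerBounded := by
  obtain ⟨C, hC⟩ := hu
  exact ⟨C, fun k => by rw [← star_zpow, Units.coe_star, norm_star]; exact hC k⟩

theorem Units.star_mul_mul_eq_of_commute_of_isPowerBounded {A : Type*} [CStarAlgebra A]
    [PartialOrder A] [StarOrderedRing A] {t u p : Aˣ} (hp : 0 ≤ (p : A))
    (ht : star t * p * t = p) (htu : Commute t u) (hu : u.IsPowerBounded)
    (habelian : ∀ a b : A, Commute a t → Commute b t → Commute a b) :
    star u * p * u = p := by
  set q := p⁻¹ * star u * p
  have ht_conj : t = p⁻¹ * (star t)⁻¹ * p :=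
    calc t = p⁻¹ * (star t)⁻¹ * (star t * p * t) := by group
      _ = p⁻¹ * (star t)⁻¹ * p := by rw [ht]
  have hqt : Commute q t := by
    have := (htu.star_star.symm.inv_right).map (MulAut.conj p⁻¹)
    rwa [MulAut.conj_apply, MulAut.conj_apply, inv_inv, ← ht_conj] at this
  have hqu : Commute q u :=
    Units.ext (habelian q u (hqt.map (Units.coeHom A)) (htu.symm.map (Units.coeHom A)))
  have hq : q.IsPowerBounded := by simpa using hu.star.conj p⁻¹
  have hqu_eq : q * u = p⁻¹ * (star u * p * u) := by simp only [q, mul_assoc]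
  refine Units.IsPowerBounded.eq_of_inv_mul hp ?_ (hqu_eq ▸ hq.mul_of_commute hu hqu)
  rw [Units.val_mul, Units.val_mul, Units.coe_star]
  exact star_left_conjugate_nonneg hp _

lemma ContinuousLinearMap.star_mul_mul_eq_iff {𝕜 E : Type*} [RCLike 𝕜] [NormedAddCommGroup E]
    [InnerProductSpace 𝕜 E] [CompleteSpace E] (t p : E →L[𝕜] E) :
    star t * p * t = p ↔ ∀ x y : E, inner 𝕜 (p (t x)) (t y) = inner 𝕜 (p x) y := by
  have hinner (x y : E) : inner 𝕜 ((star t * p * t) x) y = inner 𝕜 (p (t x)) (t y) := by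
    rw [star_eq_adjoint, mul_apply_eq_comp, mul_apply_eq_comp, adjoint_inner_left]
  refine ⟨fun h x y => by rw [← hinner, h], fun h => ?_⟩
  ext x
  exact ext_inner_right 𝕜 fun y => (hinner x y).trans (h x y)

theorem multiplicity_free_invariant_metric_is_invariant_for_commuting_general
    {ℍ : Type*} [NormedAddCommGroup ℍ] [InnerProductSpace ℂ ℍ] [CompleteSpace ℍ]
    (T₁ T₂ P₁ : ℍ ≃L[ℂ] ℍ) (c : ℝ)
    (hcomm : T₁ * T₂ = T₂ * T₁)
    (hbd₂ : ∀ k : ℤ, ‖((T₂ ^ k : ℍ ≃L[ℂ] ℍ) : ℍ →L[ℂ] ℍ)‖ ≤ c)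
    (hP₁ : (P₁ : ℍ →L[ℂ] ℍ).IsPositive)
    (hinv₁ : ∀ x y : ℍ, ⟪P₁ (T₁ x), T₁ y⟫ = ⟪P₁ x, y⟫)
    -- the commutant of T₁ is abelian (T₁ is multiplicity free)
    (habelian : ∀ S S' : ℍ →L[ℂ] ℍ,
      S ∘L (T₁ : ℍ →L[ℂ] ℍ) = (T₁ : ℍ →L[ℂ] ℍ) ∘L S →
      S' ∘L (T₁ : ℍ →L[ℂ] ℍ) = (T₁ : ℍ →L[ℂ] ℍ) ∘L S' →
      S ∘L S' = S' ∘L S) :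
    ∀ x y : ℍ, ⟪P₁ (T₂ x), T₂ y⟫ = ⟪P₁ x, y⟫ := by
  let e := (ContinuousLinearEquiv.unitsEquiv ℂ ℍ).symm
  have hu : (e T₂).IsPowerBounded := ⟨c, fun k => by rw [← map_zpow]; exact hbd₂ k⟩
  have hinv₂ : star (e T₂) * e P₁ * e T₂ = e P₁ :=
    Units.star_mul_mul_eq_of_commute_of_isPowerBounded (t := e T₁)
      ((nonneg_iff_isPositive _).mpr hP₁) (Units.ext ((star_mul_mul_eq_iff _ _).mpr hinv₁))
      ((show Commute T₁ T₂ from hcomm).map e) hu habelian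
  exact (star_mul_mul_eq_iff _ _).mp congr(Units.val $hinv₂)

/-- Let `T₁, T₂` be commuting invertible bounded operators, both uniformly bounded, and let
`h₁(x,y) = ⟪P₁x, y⟫` be a `T₁`-invariant inner product equivalent to the original one (`P₁`
bounded positive invertible). If the commutant of `T₁` is abelian (`T₁` is multiplicity
free), then `h₁` is also `T₂`-invariant. -/
theorem multiplicity_free_invariant_metric_is_invariant_for_commuting
    {ℍ : Type*} [NormedAddCommGroup ℍ] [InnerProductSpace ℂ ℍ] [CompleteSpace ℍ]
    (T₁ T₂ P₁ : ℍ ≃L[ℂ] ℍ) (c : ℝ)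
    (hcomm : T₁ * T₂ = T₂ * T₁)
    (hbd₁ : ∀ k : ℤ, ‖((T₁ ^ k : ℍ ≃L[ℂ] ℍ) : ℍ →L[ℂ] ℍ)‖ ≤ c)
    (hbd₂ : ∀ k : ℤ, ‖((T₂ ^ k : ℍ ≃L[ℂ] ℍ) : ℍ →L[ℂ] ℍ)‖ ≤ c)
    (hP₁ : (P₁ : ℍ →L[ℂ] ℍ).IsPositive)
    (hinv₁ : ∀ x y : ℍ, ⟪P₁ (T₁ x), T₁ y⟫ = ⟪P₁ x, y⟫)
    -- the commutant of T₁ is abelian (T₁ is multiplicity free)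
    (habelian : ∀ S S' : ℍ →L[ℂ] ℍ,
      S ∘L (T₁ : ℍ →L[ℂ] ℍ) = (T₁ : ℍ →L[ℂ] ℍ) ∘L S →
      S' ∘L (T₁ : ℍ →L[ℂ] ℍ) = (T₁ : ℍ →L[ℂ] ℍ) ∘L S' →
      S ∘L S' = S' ∘L S) :
    ∀ x y : ℍ, ⟪P₁ (T₂ x), T₂ y⟫ = ⟪P₁ x, y⟫ :=
  multiplicity_free_invariant_metric_is_invariant_for_commuting_general T₁ T₂ P₁ c hcomm hbd₂ hP₁
    hinv₁ habelian
end

section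
/- Let T₁, T₂, T₃ be invertible bounded operators on a complex Hilbert space with T₃ commuting with both T₁ and T₂, and T₁T₂T₁⁻¹T₂⁻¹ = T₃. Suppose h is an inner product (equivalent to the original) invariant under T₁ and T₃, and define h'(x,y) as a Banach limit of h(T₂ⁿx, T₂ⁿy) over n (assumed to exist as a shift-invariant limit since {T₂ⁿ} is uniformly bounded). Then h' is invariant under all three operators T₁, T₂, T₃. -/
/-!
Let `h'` be the Banach limit of `n ↦ h(T₂ⁿ x, T₂ⁿ y)`. Shift invariance of the limit gives
`T₂`-invariance. Since `T₃` commutes with `T₂ⁿ`, the sequences defining `h'(T₃x, T₃y)` and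
`h'(x, y)` agree termwise, and so do those for `T₁`: the commutator relation gives
`T₂ⁿ T₁ = T₃⁻ⁿ T₁ T₂ⁿ`, and `T₃⁻ⁿ T₁` preserves `h`.
-/

theorem pow_mul_eq_inv_pow_mul_mul_pow_of_commutator {G : Type*} [Group G] {a b c : G}
    (hcom : a * b * a⁻¹ * b⁻¹ = c) (hbc : Commute b c) (n : ℕ) :
    b ^ n * a = c⁻¹ ^ n * a * b ^ n := by
  have hconj : a * b * a⁻¹ = c * b := mul_inv_eq_iff_eq_mul.mp hcom
  have hconj_pow : a * b ^ n * a⁻¹ = c ^ n * b ^ n := by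
    rw [← conj_pow, hconj, hbc.symm.mul_pow]
  rw [inv_pow, mul_assoc, mul_inv_eq_iff_eq_mul.mp hconj_pow]
  group

instance ContinuousLinearEquiv.applyMulAction {R E : Type*} [Semiring R] [TopologicalSpace E]
    [AddCommMonoid E] [Module R E] : MulAction (E ≃L[R] E) E where
  smul T x := T x
  one_smul _ := rfl
  mul_smul _ _ _ := rfl

section FormStabilizer

variable {G X R : Type*} [Group G] [MulAction G X]

def formStabilizer (h : X → X → R) : Subgroup G where
  carrier := {g | ∀ x y, h (g • x) (g • y) = h x y}
  one_mem' := by simp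
  mul_mem' {g k} hg hk x y := by rw [mul_smul, mul_smul, hg, hk]
  inv_mem' {g} hg x y := by rw [← hg, smul_inv_smul, smul_inv_smul]

def orbitLimit (L : (ℕ → R) → R) (t : G) (h : X → X → R) : X → X → R :=
  fun x y => L fun n => h ((t ^ n) • x) ((t ^ n) • y)

variable {L : (ℕ → R) → R} {t : G} {h : X → X → R}

theorem self_mem_formStabilizer_orbitLimit (hL : ∀ u : ℕ → R, L (fun n => u (n + 1)) = L u) :
    t ∈ formStabilizer (orbitLimit L t h) := fun x y => by
  simp only [orbitLimit, ← mul_smul, ← pow_succ]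
  exact hL fun n => h ((t ^ n) • x) ((t ^ n) • y)

theorem mem_formStabilizer_orbitLimit {g : G}
    (hg : ∀ n : ℕ, ∃ k ∈ formStabilizer h, t ^ n * g = k * t ^ n) :
    g ∈ formStabilizer (orbitLimit L t h) := fun x y => by
  refine congrArg L (funext fun n => ?_)
  obtain ⟨k, hk, hcomm⟩ := hg n
  rw [← mul_smul, ← mul_smul, hcomm, mul_smul, mul_smul, hk]

end FormStabilizer

theorem heisenberg_invariant_metric_general
    {ℍ : Type*} [NormedAddCommGroup ℍ] [InnerProductSpace ℂ ℍ]
    (T₁ T₂ T₃ : ℍ ≃L[ℂ] ℍ)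
    (hc₂₃ : T₂ * T₃ = T₃ * T₂)
    (hcom : T₁ * T₂ * T₁⁻¹ * T₂⁻¹ = T₃)
    (h : ℍ → ℍ → ℂ)
    (hinv₁ : ∀ x y : ℍ, h (T₁ x) (T₁ y) = h x y)
    (hinv₃ : ∀ x y : ℍ, h (T₃ x) (T₃ y) = h x y)
    -- a Banach limit: a shift-invariant linear functional on sequences
    (L : (ℕ → ℂ) →ₗ[ℂ] ℂ)
    (hLshift : ∀ u : ℕ → ℂ, L (fun n => u (n + 1)) = L u)
    (h' : ℍ → ℍ → ℂ)
    (hh' : h' = fun x y => L (fun n => h ((T₂ ^ n : ℍ ≃L[ℂ] ℍ) x) ((T₂ ^ n : ℍ ≃L[ℂ] ℍ) y))) :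
    (∀ x y : ℍ, h' (T₁ x) (T₁ y) = h' x y) ∧
    (∀ x y : ℍ, h' (T₂ x) (T₂ y) = h' x y) ∧
    (∀ x y : ℍ, h' (T₃ x) (T₃ y) = h' x y) := by
  have h'_inv : ∀ g : ℍ ≃L[ℂ] ℍ, g ∈ formStabilizer (orbitLimit L T₂ h) →
      ∀ x y, h' (g x) (g y) = h' x y :=
    fun g hg x y => by subst hh'; exact hg x y
  have h₁ : T₁ ∈ formStabilizer h := hinv₁
  have h₃ : T₃ ∈ formStabilizer h := hinv₃
  refine ⟨h'_inv T₁ ?_, h'_inv T₂ ?_, h'_inv T₃ ?_⟩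
  · exact mem_formStabilizer_orbitLimit fun n =>
      ⟨T₃⁻¹ ^ n * T₁, mul_mem (pow_mem (inv_mem h₃) n) h₁,
        pow_mul_eq_inv_pow_mul_mul_pow_of_commutator hcom hc₂₃ n⟩
  · exact self_mem_formStabilizer_orbitLimit hLshift
  · exact mem_formStabilizer_orbitLimit fun n => ⟨T₃, h₃, (Commute.pow_left hc₂₃ n).eq⟩

/-- Heisenberg group relations: let `T₁, T₂, T₃` be invertible bounded operators with `T₃`
commuting with `T₁` and `T₂` and `T₁T₂T₁⁻¹T₂⁻¹ = T₃`. If `h` is an inner product invariant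
under `T₁` and `T₃`, and `h'(x,y)` is a (shift-invariant, Banach-limit style) limit of the
sequence `n ↦ h(T₂ⁿx, T₂ⁿy)`, then `h'` is invariant under all three operators. -/
theorem heisenberg_invariant_metric
    {ℍ : Type*} [NormedAddCommGroup ℍ] [InnerProductSpace ℂ ℍ] [CompleteSpace ℍ]
    (T₁ T₂ T₃ : ℍ ≃L[ℂ] ℍ)
    (hc₁₃ : T₁ * T₃ = T₃ * T₁) (hc₂₃ : T₂ * T₃ = T₃ * T₂)
    (hcom : T₁ * T₂ * T₁⁻¹ * T₂⁻¹ = T₃)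
    (h : ℍ → ℍ → ℂ)
    (hinv₁ : ∀ x y : ℍ, h (T₁ x) (T₁ y) = h x y)
    (hinv₃ : ∀ x y : ℍ, h (T₃ x) (T₃ y) = h x y)
    -- a Banach limit: a shift-invariant linear functional on sequences
    (L : (ℕ → ℂ) →ₗ[ℂ] ℂ)
    (hLshift : ∀ u : ℕ → ℂ, L (fun n => u (n + 1)) = L u)
    (h' : ℍ → ℍ → ℂ)
    (hh' : h' = fun x y => L (fun n => h ((T₂ ^ n : ℍ ≃L[ℂ] ℍ) x) ((T₂ ^ n : ℍ ≃L[ℂ] ℍ) y))) :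
    (∀ x y : ℍ, h' (T₁ x) (T₁ y) = h' x y) ∧
    (∀ x y : ℍ, h' (T₂ x) (T₂ y) = h' x y) ∧
    (∀ x y : ℍ, h' (T₃ x) (T₃ y) = h' x y) :=
  heisenberg_invariant_metric_general T₁ T₂ T₃ hc₂₃ hcom h hinv₁ hinv₃ L hLshift h' hh'
end
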